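/- arXiv:2309.10242 — 9 statements merged into one kernel-verified Lean document; each statement's English description precedes it below -/
import Mathlib

section
/- The function f : ℝ → ℝ defined by f(z) = μ z + λ·ln( λ(e^{(a/λ)(1−z)} − 1)/(1−z) ) for z ≠ 1 and f(1) = μ + λ·ln a is infinitely differentiable on ℝ. -/
theorem stmt_1 (μ lam a : ℝ) (hlam : 0 < lam) (ha : 0 < a) (f : ℝ → ℝ)
    (hf : ∀ z : ℝ, z ≠ 1 →
      f z = μ * z + lam * Real.log (lam * (Real.exp ((a / lam) * (1 - z)) - 1) / (1 - z)))
    (hf1 : f 1 = μ + lam * Real.log a) :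
    ContDiff ℝ (⊤ : ℕ∞) f := by
  set c : ℝ := a / lam with hc
  have hcpos : 0 < c := div_pos ha hlam
  set h : ℝ → ℝ := fun w => Real.exp (c * (1 - w)) with hh
  -- h is analytic everywhere
  have hha : ∀ x : ℝ, AnalyticAt ℝ h x := by
    intro x
    exact analyticAt_rexp.comp (((analyticAt_const).mul
      ((analyticAt_const).sub analyticAt_id)))
  -- derivative of h at 1
  have hderiv : deriv h 1 = -c := by
    have : HasDerivAt h (Real.exp (c * (1 - 1)) * (c * (0 - 1))) 1 := by
      exact (Real.hasDerivAt_exp _).comp 1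
        (((hasDerivAt_const 1 (1:ℝ)).sub (hasDerivAt_id 1)).const_mul c)
    simpa using this.deriv
  set g : ℝ → ℝ := fun z => -lam * dslope h 1 z with hg
  -- g at 1
  have hg1 : g 1 = a := by
    simp only [hg, dslope_same, hderiv]
    field_simp [hc]
    rw [hc]; field_simp [hlam.ne']
  -- g away from 1
  have hgne : ∀ z : ℝ, z ≠ 1 →
      g z = lam * (Real.exp (c * (1 - z)) - 1) / (1 - z) := by
    intro z hz
    have hz1 : z - 1 ≠ 0 := sub_ne_zero.2 hz
    have hz2 : (1:ℝ) - z ≠ 0 := fun hzz => hz (by linarith)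
    simp only [hg, dslope_of_ne h hz, slope_def_field, h, sub_self, mul_zero, Real.exp_zero]
    field_simp
    ring
  -- g is positive everywhere
  have hgpos : ∀ z : ℝ, 0 < g z := by
    intro z
    rcases eq_or_ne z 1 with rfl | hz
    · rw [hg1]; exact ha
    · rw [hgne z hz]
      rcases lt_or_gt_of_ne (sub_ne_zero.2 (fun hzz => hz (by linarith)) :
          (1:ℝ) - z ≠ 0) with hlt | hgt
      · -- 1 - z < 0 : exp term < 1
        have : Real.exp (c * (1 - z)) < 1 :=
          Real.exp_lt_one_iff.2 (mul_neg_of_pos_of_neg hcpos hlt)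
        have hnum : lam * (Real.exp (c * (1 - z)) - 1) < 0 :=
          mul_neg_of_pos_of_neg hlam (by linarith)
        exact div_pos_of_neg_of_neg hnum hlt
      · have : 1 < Real.exp (c * (1 - z)) :=
          Real.one_lt_exp_iff.2 (mul_pos hcpos hgt)
        exact div_pos (mul_pos hlam (by linarith)) hgt
  -- dslope h 1 is ContDiffAt everywhere
  have hds : ∀ x : ℝ, ContDiffAt ℝ (⊤ : ℕ∞) (dslope h 1) x := by
    intro x
    rcases eq_or_ne x 1 with rfl | hx
    · obtain ⟨p, hp⟩ := hha 1
      exact hp.has_fpower_series_dslope_fslope.analyticAt.contDiffAt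
    · have hcd : ContDiffAt ℝ (⊤ : ℕ∞) (fun z : ℝ => (h z - h 1) / (z - 1)) x := by
        refine ContDiffAt.div ?_ ?_ (sub_ne_zero.2 hx)
        · exact ((hha x).contDiffAt).sub contDiffAt_const
        · exact contDiffAt_id.sub contDiffAt_const
      refine hcd.congr_of_eventuallyEq ?_
      filter_upwards [isOpen_ne.mem_nhds hx] with z hz
      rw [dslope_of_ne h hz, slope_def_field]
  -- g is ContDiffAt everywhere, hence f too
  have hfg : f = fun z => μ * z + lam * Real.log (g z) := by
    funext z
    rcases eq_or_ne z 1 with rfl | hz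
    · rw [hf1, hg1]; ring
    · rw [hf z hz, hgne z hz]
  rw [hfg]
  rw [contDiff_iff_contDiffAt]
  intro x
  refine ContDiffAt.add ?_ ?_
  · exact contDiffAt_const.mul contDiffAt_id
  · refine contDiffAt_const.mul ?_
    refine ContDiffAt.comp x (Real.contDiffAt_log.2 (ne_of_gt (hgpos x))) ?_
    exact contDiffAt_const.mul (hds x)
end

section
/- The function f : ℝ → ℝ defined by f(z) = μ z + λ·ln( λ(e^{(a/λ)(1−z)} − 1)/(1−z) ) for z ≠ 1 and f(1) = μ + λ·ln a is convex on ℝ. -/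
open MeasureTheory Real Set

noncomputable def nu : Measure ℝ := volume.restrict (Set.Ioc 0 1)

noncomputable def H (t : ℝ) : ℝ := ∫ s, Real.exp (t * s) ∂nu

instance : IsFiniteMeasure nu := by
  constructor
  rw [nu, Measure.restrict_apply_univ, Real.volume_Ioc]
  exact ENNReal.ofReal_lt_top

lemma H_integrable (t : ℝ) : Integrable (fun s => Real.exp (t * s)) nu := by
  have : Continuous fun s : ℝ => Real.exp (t * s) := by continuity
  exact this.integrableOn_Ioc

lemma H_pos (t : ℝ) : 0 < H t := by
  rw [H, integral_pos_iff_support_of_nonneg (fun s => (Real.exp_pos _).le) (H_integrable t)]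
  have : (Function.support fun s => Real.exp (t * s)) = Set.univ := by
    ext s; simp [Function.support, (Real.exp_pos _).ne']
  rw [this, nu, Measure.restrict_apply_univ, Real.volume_Ioc]
  norm_num

open intervalIntegral in
lemma H_eq (t : ℝ) (ht : t ≠ 0) : H t = (Real.exp t - 1) / t := by
  have h1 : H t = ∫ s in (0:ℝ)..1, Real.exp (t * s) := by
    rw [H, nu, integral_of_le zero_le_one]
  rw [h1, integral_comp_mul_left Real.exp ht]
  simp [integral_exp, smul_eq_mul, div_eq_inv_mul]

lemma H_zero : H 0 = 1 := by
  have : H 0 = ∫ _s, (1:ℝ) ∂nu := by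
    rw [H]; congr 1; ext s; simp
  rw [this, integral_const, smul_eq_mul, mul_one]
  rw [nu, measureReal_restrict_apply_univ, measureReal_def, Real.volume_Ioc]
  norm_num

lemma H_memLp (t : ℝ) (p : ENNReal) : MemLp (fun s => Real.exp (t * s)) p nu := by
  refine MemLp.of_bound ((Continuous.aestronglyMeasurable (by continuity))) (Real.exp |t|) ?_
  rw [nu, ae_restrict_iff' measurableSet_Ioc]
  filter_upwards with s hs
  rw [Real.norm_eq_abs, Real.abs_exp]
  apply Real.exp_le_exp.mpr
  calc t * s ≤ |t * s| := le_abs_self _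
    _ = |t| * |s| := abs_mul _ _
    _ ≤ |t| * 1 := by
        apply mul_le_mul_of_nonneg_left _ (abs_nonneg t)
        rw [abs_of_pos hs.1]; exact hs.2
    _ = |t| := mul_one _

lemma H_logconvex : ConvexOn ℝ Set.univ fun t => Real.log (H t) := by
  refine ⟨convex_univ, fun x _ y _ p q hp hq hpq => ?_⟩
  simp only [smul_eq_mul]
  rcases eq_or_lt_of_le hp with hp0 | hp0
  · simp [← hp0, show q = 1 by linarith]
  rcases eq_or_lt_of_le hq with hq0 | hq0
  · simp [← hq0, show p = 1 by linarith]
  have hconj : Real.HolderConjugate (1/p) (1/q) := by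
    constructor
    · simp only [one_div, inv_inv, inv_one]; exact hpq
    · positivity
    · positivity
  have key : H (p * x + q * y) ≤ (H x) ^ p * (H y) ^ q := by
    have holder := integral_mul_le_Lp_mul_Lq_of_nonneg (μ := nu) hconj
      (f := fun s => Real.exp (p * x * s)) (g := fun s => Real.exp (q * y * s))
      (Filter.Eventually.of_forall fun s => (Real.exp_pos _).le)
      (Filter.Eventually.of_forall fun s => (Real.exp_pos _).le)
      (H_memLp _ _) (H_memLp _ _)
    have e1 : (∫ s, Real.exp (p * x * s) * Real.exp (q * y * s) ∂nu) = H (p * x + q * y) := by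
      rw [H]; congr 1; ext s; rw [← Real.exp_add]; ring_nf
    have e2 : (∫ s, Real.exp (p * x * s) ^ (1/p) ∂nu) = H x := by
      rw [H]; congr 1; ext s
      rw [← Real.exp_mul]
      congr 1; field_simp
    have e3 : (∫ s, Real.exp (q * y * s) ^ (1/q) ∂nu) = H y := by
      rw [H]; congr 1; ext s
      rw [← Real.exp_mul]
      congr 1; field_simp
    rw [e1, e2, e3] at holder
    simpa [one_div_one_div] using holder
  calc Real.log (H (p * x + q * y)) ≤ Real.log ((H x) ^ p * (H y) ^ q) :=
        Real.log_le_log (H_pos _) key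
    _ = p * Real.log (H x) + q * Real.log (H y) := by
        rw [Real.log_mul (Real.rpow_pos_of_pos (H_pos x) p).ne'
          (Real.rpow_pos_of_pos (H_pos y) q).ne',
          Real.log_rpow (H_pos x), Real.log_rpow (H_pos y)]

theorem stmt_2 (μ lam a : ℝ) (hlam : 0 < lam) (ha : 0 < a) (f : ℝ → ℝ)
    (hf : ∀ z : ℝ, z ≠ 1 →
      f z = μ * z + lam * Real.log (lam * (Real.exp ((a / lam) * (1 - z)) - 1) / (1 - z)))
    (hf1 : f 1 = μ + lam * Real.log a) :
    ConvexOn ℝ Set.univ f := by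
  set c : ℝ := a / lam with hc
  have hcpos : 0 < c := div_pos ha hlam
  have hfe : ∀ z, f z = μ * z + lam * Real.log a + lam * Real.log (H (c * (1 - z))) := by
    intro z
    by_cases hz : z = 1
    · subst hz
      simp [hf1, H_zero]
    · have h1z : (1 : ℝ) - z ≠ 0 := sub_ne_zero.mpr (Ne.symm hz)
      have ht : c * (1 - z) ≠ 0 := mul_ne_zero hcpos.ne' h1z
      rw [hf z hz, H_eq _ ht]
      have key : lam * (Real.exp (c * (1 - z)) - 1) / (1 - z)
          = a * ((Real.exp (c * (1 - z)) - 1) / (c * (1 - z))) := by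
        rw [hc]; field_simp
      rw [key, Real.log_mul ha.ne' ?hne]
      · ring
      case hne =>
        have := H_pos (c * (1 - z))
        rw [H_eq _ ht] at this
        exact this.ne'
  have hF : ConvexOn ℝ Set.univ
      fun z => μ * z + lam * Real.log a + lam * Real.log (H (c * (1 - z))) := by
    refine ⟨convex_univ, fun x _ y _ p q hp hq hpq => ?_⟩
    simp only [smul_eq_mul]
    have hcomb : c * (1 - (p * x + q * y)) = p * (c * (1 - x)) + q * (c * (1 - y)) := by
      have hq' : q = 1 - p := by linarith
      rw [hq']; ring
    have hL := H_logconvex.2 (Set.mem_univ (c * (1 - x))) (Set.mem_univ (c * (1 - y))) hp hq hpq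
    simp only [smul_eq_mul] at hL
    rw [hcomb]
    have h2 := mul_le_mul_of_nonneg_left hL hlam.le
    have e3 : p * (μ * x + lam * Real.log a + lam * Real.log (H (c * (1 - x))))
        + q * (μ * y + lam * Real.log a + lam * Real.log (H (c * (1 - y))))
        = μ * (p * x + q * y) + lam * Real.log a
          + lam * (p * Real.log (H (c * (1 - x))) + q * Real.log (H (c * (1 - y)))) := by
      have hq' : q = 1 - p := by linarith
      rw [hq']; ring
    rw [e3]
    linarith [h2]
  have : f = fun z => μ * z + lam * Real.log a + lam * Real.log (H (c * (1 - z))) :=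
    funext hfe
  rw [this]
  exact hF
end

section
/- Assume a > 1. The function z ↦ f(z) − μ z is strictly decreasing on ℝ; it satisfies f(1) − μ = λ·ln a > 0 and f(1+λ) − μ(1+λ) = λ·ln(1 − e^{−a}) < 0. Consequently there exists a unique real number H with f(H) = μ H, and this H lies in the open interval (1, 1+λ). -/
open Real Set

/-- The function `(exp s - 1)/s`, extended by `1` at `0`. -/
noncomputable def kfun : ℝ → ℝ := fun s => if s = 0 then 1 else (Real.exp s - 1) / s

lemma kfun_ne {s : ℝ} (hs : s ≠ 0) : kfun s = (Real.exp s - 1) / s := if_neg hs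

lemma kfun_zero : kfun 0 = 1 := if_pos rfl

lemma kfun_lt_one {s : ℝ} (hs : s < 0) : kfun s < 1 := by
  rw [kfun_ne hs.ne, div_lt_iff_of_neg hs]
  have := Real.add_one_lt_exp hs.ne
  linarith

lemma one_lt_kfun {s : ℝ} (hs : 0 < s) : 1 < kfun s := by
  rw [kfun_ne hs.ne', lt_div_iff₀ hs, one_mul]
  have := Real.add_one_lt_exp hs.ne'
  linarith

lemma kfun_pos (s : ℝ) : 0 < kfun s := by
  rcases lt_trichotomy s 0 with h | rfl | h
  · rw [kfun_ne h.ne]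
    apply div_pos_of_neg_of_neg _ h
    have := Real.exp_lt_one_iff.mpr h
    linarith
  · rw [kfun_zero]; norm_num
  · rw [kfun_ne h.ne']
    apply div_pos _ h
    have := Real.add_one_lt_exp h.ne'
    linarith

lemma kfun_strictMono : StrictMono kfun := by
  intro x y hxy
  rcases eq_or_ne x 0 with rfl | hx
  · rw [kfun_zero]; exact one_lt_kfun hxy
  rcases eq_or_ne y 0 with rfl | hy
  · rw [kfun_zero]; exact kfun_lt_one (hx.lt_of_le (le_of_lt hxy))
  · rw [kfun_ne hx, kfun_ne hy]
    have := strictConvexOn_exp.secant_strict_mono (a := 0) (mem_univ _) (mem_univ _)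
      (mem_univ _) hx hy hxy
    simpa using this

lemma kfun_continuous : Continuous kfun := by
  rw [continuous_iff_continuousAt]
  intro x
  rcases eq_or_ne x 0 with rfl | hx
  · have hd : HasDerivAt Real.exp 1 0 := by simpa using Real.hasDerivAt_exp 0
    have hslope : Filter.Tendsto (slope Real.exp 0) (nhdsWithin 0 {(0:ℝ)}ᶜ) (nhds 1) :=
      hasDerivAt_iff_tendsto_slope.mp hd
    have heq : ∀ s ∈ ({(0:ℝ)}ᶜ : Set ℝ), kfun s = slope Real.exp 0 s := by
      intro s hs
      have hs' : s ≠ 0 := hs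
      rw [kfun_ne hs', slope_def_field]
      simp [Real.exp_zero]
    have h1 : Filter.Tendsto kfun (nhdsWithin 0 {(0:ℝ)}ᶜ) (nhds 1) := by
      refine hslope.congr' ?_
      filter_upwards [self_mem_nhdsWithin] with s hs
      exact (heq s hs).symm
    have h2 : Filter.Tendsto kfun (pure (0:ℝ)) (nhds (kfun 0)) := tendsto_pure_nhds _ _
    rw [kfun_zero] at h2
    have : Filter.Tendsto kfun (nhds 0) (nhds 1) := by
      rw [← nhdsNE_sup_pure]
      exact h1.sup h2
    simpa [ContinuousAt, kfun_zero] using this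
  · have : ContinuousAt (fun s => (Real.exp s - 1) / s) x :=
      ((Real.continuous_exp.continuousAt.sub continuousAt_const).div continuousAt_id hx)
    refine this.congr ?_
    filter_upwards [isOpen_compl_singleton.mem_nhds hx] with s hs
    exact (kfun_ne hs).symm

theorem stmt_3 (μ lam a : ℝ) (hlam : 0 < lam) (ha : 1 < a) (f : ℝ → ℝ)
    (hf : ∀ z : ℝ, z ≠ 1 →
      f z = μ * z + lam * Real.log (lam * (Real.exp ((a / lam) * (1 - z)) - 1) / (1 - z)))
    (hf1 : f 1 = μ + lam * Real.log a) :
    StrictAnti (fun z : ℝ => f z - μ * z) ∧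
    f 1 - μ * 1 = lam * Real.log a ∧ 0 < lam * Real.log a ∧
    f (1 + lam) - μ * (1 + lam) = lam * Real.log (1 - Real.exp (-a)) ∧
    lam * Real.log (1 - Real.exp (-a)) < 0 ∧
    (∃! H : ℝ, f H = μ * H) ∧
    (∀ H : ℝ, f H = μ * H → H ∈ Set.Ioo 1 (1 + lam)) := by
  have ha0 : 0 < a := lt_trans one_pos ha
  set c := a / lam with hc_def
  have hc : 0 < c := div_pos ha0 hlam
  -- the auxiliary function g
  set g : ℝ → ℝ := fun z => lam * Real.log (a * kfun (c * (1 - z))) with hg_def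
  have hak : ∀ t : ℝ, 0 < a * kfun t := fun t => mul_pos ha0 (kfun_pos t)
  -- g equals f z - μ z
  have hgf : ∀ z : ℝ, f z - μ * z = g z := by
    intro z
    rcases eq_or_ne z 1 with rfl | hz
    · simp only [hg_def]
      rw [hf1]
      norm_num [kfun_zero]
    · have ht : (1 : ℝ) - z ≠ 0 := sub_ne_zero.mpr (Ne.symm hz)
      have hct : c * (1 - z) ≠ 0 := mul_ne_zero hc.ne' ht
      rw [hf z hz]
      simp only [hg_def]
      have : a * kfun (c * (1 - z)) = lam * (Real.exp (c * (1 - z)) - 1) / (1 - z) := by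
        rw [kfun_ne hct]
        field_simp [hc_def]
        have hcl : c * lam = a := by rw [hc_def]; exact div_mul_cancel₀ a hlam.ne'
        rw [← hcl]
        ring
      rw [this]
      ring
  -- strict antitonicity
  have hanti : StrictAnti g := by
    intro x y hxy
    simp only [hg_def]
    have h1 : c * (1 - y) < c * (1 - x) := by
      apply mul_lt_mul_of_pos_left _ hc
      linarith
    have h2 : kfun (c * (1 - y)) < kfun (c * (1 - x)) := kfun_strictMono h1
    have h3 : a * kfun (c * (1 - y)) < a * kfun (c * (1 - x)) :=
      mul_lt_mul_of_pos_left h2 ha0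
    exact mul_lt_mul_of_pos_left (Real.log_lt_log (hak _) h3) hlam
  have hantif : StrictAnti (fun z : ℝ => f z - μ * z) := by
    intro x y hxy
    simp only
    rw [hgf x, hgf y]
    exact hanti hxy
  -- value at 1
  have hg1 : f 1 - μ * 1 = lam * Real.log a := by rw [hf1]; ring
  have hloga : 0 < lam * Real.log a := mul_pos hlam (Real.log_pos ha)
  -- value at 1 + lam
  have hg2 : f (1 + lam) - μ * (1 + lam) = lam * Real.log (1 - Real.exp (-a)) := by
    rw [hgf (1 + lam)]
    simp only [hg_def]
    have h1 : c * (1 - (1 + lam)) = -a := by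
      rw [hc_def, show (1:ℝ) - (1 + lam) = -lam by ring, mul_neg, div_mul_cancel₀ a hlam.ne']
    rw [h1, kfun_ne (by linarith : (-a : ℝ) ≠ 0)]
    have : a * ((Real.exp (-a) - 1) / (-a)) = 1 - Real.exp (-a) := by
      rw [div_neg, mul_neg, ← mul_div_assoc, mul_div_cancel_left₀ _ ha0.ne']
      ring
    rw [this]
  have hexpa : Real.exp (-a) < 1 := Real.exp_lt_one_iff.mpr (by linarith)
  have hexpa0 : 0 < Real.exp (-a) := Real.exp_pos _
  have hneg : lam * Real.log (1 - Real.exp (-a)) < 0 := by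
    apply mul_neg_of_pos_of_neg hlam
    apply Real.log_neg (by linarith) (by linarith)
  -- continuity of g
  have hgcont : Continuous g := by
    rw [continuous_iff_continuousAt]
    intro x
    have hin : ContinuousAt (fun z : ℝ => a * kfun (c * (1 - z))) x := by
      exact (continuousAt_const.mul ((kfun_continuous.continuousAt).comp
        ((continuousAt_const.mul (continuousAt_const.sub continuousAt_id)))))
    exact continuousAt_const.mul (hin.log (hak _).ne')
  -- existence via IVT
  have hle : (1 : ℝ) ≤ 1 + lam := by linarith
  have hivt := intermediate_value_Ioo' hle hgcont.continuousOn
  have hg1' : g 1 = lam * Real.log a := by rw [← hgf 1, hg1]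
  have hg2' : g (1 + lam) = lam * Real.log (1 - Real.exp (-a)) := by rw [← hgf, hg2]
  have h0mem : (0 : ℝ) ∈ Ioo (g (1 + lam)) (g 1) := by
    rw [hg1', hg2']; exact ⟨hneg, hloga⟩
  obtain ⟨H, hHmem, hH0⟩ := hivt h0mem
  have hroot : ∀ K : ℝ, f K = μ * K → K ∈ Set.Ioo 1 (1 + lam) := by
    intro K hK
    have hgK : g K = 0 := by rw [← hgf]; rw [hK]; ring
    by_contra hcon
    simp only [Set.mem_Ioo, not_and_or, not_lt] at hcon
    rcases hcon with h | h
    · have : g 1 ≤ g K := hanti.antitone h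
      rw [hg1', hgK] at this
      linarith
    · have : g K ≤ g (1 + lam) := hanti.antitone h
      rw [hg2', hgK] at this
      linarith
  refine ⟨hantif, hg1, hloga, hg2, hneg, ⟨H, ?_, ?_⟩, hroot⟩
  · have : f H - μ * H = 0 := by rw [hgf, hH0]
    linarith
  · intro K hK
    have hgK : g K = 0 := by rw [← hgf, hK]; ring
    exact hanti.injective (by rw [hgK, hH0])
end

section
/- Let v : [0,∞) → ℝ be three times continuously differentiable and bounded, and suppose v satisfies (1/2)σ² v''(x) + f(v'(x)) − c·v(x) = 0 for all x ≥ 0, with v(0) = 0 and v'(0) > 0. Then v'(x) > 0 for all x ≥ 0 (v is strictly increasing) and v''(x) ≤ 0 for all x ≥ 0 (v is concave). -/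
open Real Set Filter Topology

noncomputable def gg : ℝ → ℝ := fun w => if w = 0 then 1 else (Real.exp w - 1) / w

noncomputable def gg' : ℝ → ℝ :=
  fun w => if w = 0 then 1/2 else ((w - 1) * Real.exp w + 1) / w ^ 2

lemma gg_pos (w : ℝ) : 0 < gg w := by
  unfold gg
  rcases lt_trichotomy w 0 with h | h | h
  · rw [if_neg h.ne]
    have : Real.exp w < 1 := Real.exp_lt_one_iff.2 h
    exact div_pos_of_neg_of_neg (by linarith) h
  · simp [h]
  · rw [if_neg h.ne']
    have : 1 < Real.exp w := by
      have := Real.add_one_le_exp w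
      nlinarith [Real.exp_pos w, Real.exp_pos (w/2), Real.add_one_le_exp (w/2),
        sq_nonneg (Real.exp (w/2) - 1)]
    exact div_pos (by linarith) h

lemma exp_taylor2 {w : ℝ} (hw : |w| ≤ 1) : |Real.exp w - 1 - w - w^2/2| ≤ |w|^3 := by
  have h := Real.exp_bound hw (n := 3) (by norm_num)
  have hs : ∑ m ∈ Finset.range 3, w ^ m / (Nat.factorial m) = 1 + w + w^2/2 := by
    rw [Finset.sum_range_succ, Finset.sum_range_succ, Finset.sum_range_succ]
    norm_num [Nat.factorial]
  rw [hs] at h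
  have h2 : |Real.exp w - 1 - w - w^2/2| = |Real.exp w - (1 + w + w^2/2)| := by ring_nf
  rw [h2]
  refine h.trans ?_
  have h3 : (0:ℝ) ≤ |w|^3 := by positivity
  have : ((Nat.succ 3 : ℕ) : ℝ) / ((Nat.factorial 3 : ℕ) * (3:ℕ)) ≤ 1 := by
    norm_num [Nat.factorial]
  nlinarith

lemma hasDerivAt_gg (w : ℝ) : HasDerivAt gg (gg' w) w := by
  rcases eq_or_ne w 0 with rfl | hw
  · rw [hasDerivAt_iff_tendsto_slope]
    have hgg'0 : gg' 0 = 1/2 := by simp [gg']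
    rw [hgg'0]
    have key : ∀ u : ℝ, u ≠ 0 → |u| ≤ 1 → |slope gg 0 u - 1/2| ≤ |u| := by
      intro u hu h1
      have hgg : gg u = (Real.exp u - 1)/u := if_neg hu
      have hgg0 : gg 0 = 1 := if_pos rfl
      have hs : slope gg 0 u = ((Real.exp u - 1)/u - 1)/u := by
        rw [slope_def_field, hgg, hgg0]
        field_simp
        ring
      have hs2 : slope gg 0 u - 1/2 = (Real.exp u - 1 - u - u^2/2)/u^2 := by
        rw [hs]; field_simp
      rw [hs2, abs_div]
      rw [div_le_iff₀ (by positivity)]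
      calc |Real.exp u - 1 - u - u^2/2| ≤ |u|^3 := exp_taylor2 h1
        _ = |u| * |u^2| := by rw [abs_pow (u:ℝ) 2]; ring
    have hb : Tendsto (fun u : ℝ => slope gg 0 u - 1/2) (𝓝[≠] (0:ℝ)) (𝓝 0) := by
      refine squeeze_zero_norm' (a := fun u : ℝ => |u|) ?_ ?_
      case refine_2 =>
        have : Tendsto (fun u : ℝ => |u|) (𝓝 (0:ℝ)) (𝓝 |(0:ℝ)|) :=
          (continuous_abs.tendsto 0)
        simpa using this.mono_left nhdsWithin_le_nhds
      case refine_1 =>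
        filter_upwards [eventually_nhdsWithin_of_eventually_nhds
          (eventually_abs_sub_lt (0:ℝ) (by norm_num : (0:ℝ) < 1)), self_mem_nhdsWithin]
          with u hu1 hu2
        simp only [sub_zero] at hu1
        exact key u hu2 hu1.le
    have := hb.add (tendsto_const_nhds (x := (1/2 : ℝ)))
    simpa using this
  · have hne : ∀ᶠ u in 𝓝 w, u ≠ 0 := eventually_ne_nhds hw
    have h1 : HasDerivAt (fun u => (Real.exp u - 1)/u) (((w - 1) * Real.exp w + 1) / w ^ 2) w := by
      have := ((Real.hasDerivAt_exp w).sub_const 1).div (hasDerivAt_id w) hw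
      refine this.congr_deriv ?_
      simp only [id]
      ring
    have h2 : HasDerivAt gg (((w - 1) * Real.exp w + 1) / w ^ 2) w := by
      apply h1.congr_of_eventuallyEq
      filter_upwards [hne] with u hu
      simp [gg, if_neg hu]
    rw [gg', if_neg hw]
    exact h2

lemma continuous_gg' : Continuous gg' := by
  rw [continuous_iff_continuousAt]
  intro w
  rcases eq_or_ne w 0 with rfl | hw
  · have hgg'0 : gg' 0 = 1/2 := by simp [gg']
    rw [ContinuousAt, hgg'0]
    rw [← nhdsNE_sup_pure, tendsto_sup]
    constructor
    · have key : ∀ u : ℝ, u ≠ 0 → |u| ≤ 1 → |gg' u - 1/2| ≤ 3 * |u| := by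
        intro u hu h1
        have hg : gg' u = ((u - 1) * Real.exp u + 1) / u^2 := if_neg hu
        have hs2 : gg' u - 1/2 = ((u-1) * (Real.exp u - 1 - u - u^2/2) + u^3/2) / u^2 := by
          rw [hg]; field_simp; ring
        rw [hs2, abs_div, div_le_iff₀ (by positivity)]
        have hE := exp_taylor2 h1
        have h2 : |u - 1| ≤ 2 := by
          rw [abs_le] at h1 ⊢; constructor <;> linarith [h1.1, h1.2]
        calc |(u-1) * (Real.exp u - 1 - u - u^2/2) + u^3/2|
            ≤ |u-1| * |Real.exp u - 1 - u - u^2/2| + |u^3|/2 := by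
              refine (abs_add_le _ _).trans ?_
              rw [abs_mul, abs_div]
              simp [abs_of_pos]
          _ ≤ 2 * |u|^3 + |u|^3/2 := by
              rw [abs_pow]
              have := abs_nonneg (Real.exp u - 1 - u - u^2/2)
              nlinarith [abs_nonneg u, pow_nonneg (abs_nonneg u) 3]
          _ ≤ 3 * |u| * |u^2| := by
              rw [abs_pow]
              have h0 : 0 ≤ |u| := abs_nonneg u
              nlinarith
      have hb : Tendsto (fun u : ℝ => gg' u - 1/2) (𝓝[≠] (0:ℝ)) (𝓝 0) := by
        refine squeeze_zero_norm' (a := fun u : ℝ => 3 * |u|) ?_ ?_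
        case refine_2 =>
          have : Tendsto (fun u : ℝ => 3 * |u|) (𝓝 (0:ℝ)) (𝓝 (3 * |(0:ℝ)|)) :=
            (continuous_const.mul continuous_abs).tendsto 0
          simpa using this.mono_left nhdsWithin_le_nhds
        case refine_1 =>
          filter_upwards [eventually_nhdsWithin_of_eventually_nhds
            (eventually_abs_sub_lt (0:ℝ) (by norm_num : (0:ℝ) < 1)), self_mem_nhdsWithin]
            with u hu1 hu2
          simp only [sub_zero] at hu1
          exact key u hu2 hu1.le
      have := hb.add (tendsto_const_nhds (x := (1/2 : ℝ)))
      simpa using this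
    · simpa [hgg'0] using (tendsto_pure_nhds gg' 0)
  · have hne : ∀ᶠ u in 𝓝 w, u ≠ 0 := eventually_ne_nhds hw
    have h1 : ContinuousAt (fun u : ℝ => ((u - 1) * Real.exp u + 1) / u^2) w := by
      apply ContinuousAt.div
      · fun_prop
      · fun_prop
      · positivity
    apply h1.congr
    filter_upwards [hne] with u hu
    simp [gg', if_neg hu]


lemma no_up (k c : ℝ) (hk : 0 < k) (hc : 0 < c) (F Fd : ℝ → ℝ)
    (hF : ∀ z, HasDerivAt F (Fd z) z)
    (v v' v'' v''' : ℝ → ℝ)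
    (hd1 : ∀ x ∈ Set.Ici (0:ℝ), HasDerivWithinAt v (v' x) (Set.Ici 0) x)
    (hd2 : ∀ x ∈ Set.Ici (0:ℝ), HasDerivWithinAt v' (v'' x) (Set.Ici 0) x)
    (hd3 : ∀ x ∈ Set.Ici (0:ℝ), HasDerivWithinAt v'' (v''' x) (Set.Ici 0) x)
    (hbdd : ∃ C : ℝ, ∀ x ∈ Set.Ici (0:ℝ), |v x| ≤ C)
    (hode : ∀ x ∈ Set.Ici (0:ℝ), v'' x = k * (c * v x - F (v' x))) :
    ∀ x₀ ∈ Set.Ici (0:ℝ), 0 < v' x₀ → v'' x₀ ≤ 0 := by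
  intro x₀ hx₀ hv'pos
  by_contra hcon
  push_neg at hcon
  have cv : ContinuousOn v (Set.Ici 0) := fun x hx => (hd1 x hx).continuousWithinAt
  have cv' : ContinuousOn v' (Set.Ici 0) := fun x hx => (hd2 x hx).continuousWithinAt
  have cv'' : ContinuousOn v'' (Set.Ici 0) := fun x hx => (hd3 x hx).continuousWithinAt
  set S : Set ℝ := {x | x₀ ≤ x ∧ v'' x ≤ 0} with hSdef
  rcases Set.eq_empty_or_nonempty S with hS | hS
  · -- v'' > 0 on [x₀, ∞), so v grows linearly, contradicting boundedness
    have hpos : ∀ x, x₀ ≤ x → 0 < v'' x := by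
      intro x hx
      by_contra h
      push_neg at h
      exact Set.eq_empty_iff_forall_notMem.1 hS x ⟨hx, h⟩
    have hsub : Set.Ici x₀ ⊆ Set.Ici (0:ℝ) := Set.Ici_subset_Ici.2 hx₀
    have hmono : MonotoneOn v' (Set.Ici x₀) := by
      apply monotoneOn_of_hasDerivWithinAt_nonneg (convex_Ici x₀) (cv'.mono hsub)
        (f' := v'')
      · intro x hx
        rw [interior_Ici] at hx
        exact ((hd2 x (hsub (Set.mem_Ici.2 (le_of_lt (Set.mem_Ioi.1 hx))))).mono (fun y (hy : y ∈ Set.Ioi x₀) => hsub (Set.mem_Ici.2 (le_of_lt (Set.mem_Ioi.1 hy))))).mono (by rw [interior_Ici])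
      · intro x hx
        rw [interior_Ici] at hx
        exact (hpos x hx.le).le
    have hv'ge : ∀ x, x₀ ≤ x → v' x₀ ≤ v' x := fun x hx =>
      hmono Set.self_mem_Ici hx hx
    have hφ : MonotoneOn (fun y => v y - v' x₀ * y) (Set.Ici x₀) := by
      apply monotoneOn_of_hasDerivWithinAt_nonneg (convex_Ici x₀)
        (f' := fun y => v' y - v' x₀)
      · exact ((cv.mono hsub).sub (continuous_const.mul continuous_id).continuousOn)
      · intro x hx
        rw [interior_Ici] at hx
        have h1 : HasDerivWithinAt v (v' x) (interior (Set.Ici x₀)) x := by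
          rw [interior_Ici]
          exact (hd1 x (hsub (Set.mem_Ici.2 (le_of_lt (Set.mem_Ioi.1 hx))))).mono (fun y hy => hsub (Set.mem_Ici.2 (le_of_lt (Set.mem_Ioi.1 hy))))
        rw [interior_Ici]
        have h2 : HasDerivWithinAt (fun y => v' x₀ * y) (v' x₀) (Set.Ioi x₀) x := by
          simpa using (hasDerivWithinAt_id x (Set.Ioi x₀)).const_mul (v' x₀)
        rw [interior_Ici] at h1
        exact h1.sub h2
      · intro x hx
        rw [interior_Ici] at hx
        have := hv'ge x hx.le
        linarith
    obtain ⟨C, hC⟩ := hbdd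
    set X : ℝ := max x₀ ((C + 1 - (v x₀ - v' x₀ * x₀)) / v' x₀) with hX
    have hXx₀ : x₀ ≤ X := le_max_left _ _
    have h1 : v x₀ - v' x₀ * x₀ ≤ v X - v' x₀ * X := hφ Set.self_mem_Ici hXx₀ hXx₀
    have h2 : (C + 1 - (v x₀ - v' x₀ * x₀)) / v' x₀ ≤ X := le_max_right _ _
    have h3 : C + 1 - (v x₀ - v' x₀ * x₀) ≤ v' x₀ * X := by
      rw [div_le_iff₀ hv'pos] at h2
      linarith [h2]
    have h4 : C + 1 ≤ v X := by linarith
    have h5 := hC X (hsub hXx₀)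
    rw [abs_le] at h5
    linarith [h5.2]
  · -- let x₁ be the first point ≥ x₀ where v'' ≤ 0
    have hbdd' : BddBelow S := ⟨x₀, fun x hx => hx.1⟩
    have hclosed : IsClosed S := by
      have : S = Set.Ici x₀ ∩ (Set.Ici 0 ∩ v'' ⁻¹' Set.Iic 0) := by
        ext x
        simp only [hSdef, Set.mem_setOf_eq, Set.mem_inter_iff, Set.mem_Ici, Set.mem_preimage,
          Set.mem_Iic]
        exact ⟨fun h => ⟨h.1, le_trans hx₀ h.1, h.2⟩, fun h => ⟨h.1, h.2.2⟩⟩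
      rw [this]
      exact isClosed_Ici.inter (cv''.preimage_isClosed_of_isClosed isClosed_Ici isClosed_Iic)
    set x₁ : ℝ := sInf S with hx₁def
    have hx₁S : x₁ ∈ S := hclosed.csInf_mem hS hbdd'
    have h0x₁ : x₁ ∈ Set.Ici (0:ℝ) := le_trans hx₀ hx₁S.1
    have hx₀1 : x₀ < x₁ := by
      rcases lt_or_eq_of_le hx₁S.1 with h | h
      · exact h
      · exfalso; rw [← h] at hx₁S; linarith [hx₁S.2]
    have hpos : ∀ x ∈ Set.Ico x₀ x₁, 0 < v'' x := by
      intro x hx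
      by_contra h
      push_neg at h
      have : x ∈ S := ⟨hx.1, h⟩
      exact absurd (csInf_le hbdd' this) (not_le.2 hx.2)
    have hIco : Set.Ico x₀ x₁ ⊆ Set.Ici (0:ℝ) := fun y hy => le_trans hx₀ hy.1
    have hne : (𝓝[Set.Ico x₀ x₁] x₁).NeBot := by
      apply mem_closure_iff_nhdsWithin_neBot.1
      rw [closure_Ico hx₀1.ne]
      exact ⟨hx₀1.le, le_refl _⟩
    have hv''x₁ : v'' x₁ = 0 := by
      refine le_antisymm hx₁S.2 ?_
      have hcw : Filter.Tendsto v'' (𝓝[Set.Ico x₀ x₁] x₁) (𝓝 (v'' x₁)) :=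
        ((cv'' x₁ h0x₁).mono hIco).tendsto
      exact ge_of_tendsto hcw (eventually_mem_nhdsWithin.mono fun x hx => (hpos x hx).le)
    -- v' at x₁ is positive
    have hIcc : Set.Icc x₀ x₁ ⊆ Set.Ici (0:ℝ) := fun y hy => le_trans hx₀ hy.1
    have hmono : MonotoneOn v' (Set.Icc x₀ x₁) := by
      apply monotoneOn_of_hasDerivWithinAt_nonneg (convex_Icc x₀ x₁) (cv'.mono hIcc)
        (f' := v'')
      · intro x hx
        rw [interior_Icc] at hx ⊢
        exact (hd2 x (hIcc (Set.Ioo_subset_Icc_self hx))).mono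
          (fun y hy => hIcc (Set.Ioo_subset_Icc_self hy))
      · intro x hx
        rw [interior_Icc] at hx
        exact (hpos x ⟨hx.1.le, hx.2⟩).le
    have hv'x₁ : 0 < v' x₁ :=
      lt_of_lt_of_le hv'pos (hmono (Set.left_mem_Icc.2 hx₀1.le) (Set.right_mem_Icc.2 hx₀1.le)
        hx₀1.le)
    -- compute v''' x₁
    have hw : HasDerivWithinAt (fun x => k * (c * v x - F (v' x)))
        (k * (c * v' x₁ - Fd (v' x₁) * v'' x₁)) (Set.Ici 0) x₁ :=
      (((hd1 x₁ h0x₁).const_mul c).sub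
        ((hF (v' x₁)).comp_hasDerivWithinAt x₁ (hd2 x₁ h0x₁))).const_mul k
    have hw2 : HasDerivWithinAt v'' (k * (c * v' x₁ - Fd (v' x₁) * v'' x₁)) (Set.Ici 0) x₁ :=
      hw.congr (fun y hy => hode y hy) (hode x₁ h0x₁)
    have hv''' : v''' x₁ = k * (c * v' x₁ - Fd (v' x₁) * v'' x₁) := by
      have h1 := (hd3 x₁ h0x₁).derivWithin ((uniqueDiffOn_Ici 0) x₁ h0x₁)
      have h2 := hw2.derivWithin ((uniqueDiffOn_Ici 0) x₁ h0x₁)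
      rw [← h1, ← h2]
    have hpos3 : 0 < v''' x₁ := by
      rw [hv''', hv''x₁]
      have : k * (c * v' x₁ - Fd (v' x₁) * 0) = k * (c * v' x₁) := by ring
      rw [this]
      positivity
    -- but slopes from the left are nonpositive
    have hder : HasDerivWithinAt v'' (v''' x₁) (Set.Ico x₀ x₁) x₁ :=
      (hd3 x₁ h0x₁).mono hIco
    rw [hasDerivWithinAt_iff_tendsto_slope] at hder
    have hx₁notin : x₁ ∉ Set.Ico x₀ x₁ := fun h => lt_irrefl x₁ h.2
    rw [Set.diff_singleton_eq_self hx₁notin] at hder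
    have hle : v''' x₁ ≤ 0 := by
      refine le_of_tendsto hder (eventually_mem_nhdsWithin.mono fun x hx => ?_)
      have h1 : 0 < v'' x := hpos x hx
      have h2 : x - x₁ < 0 := sub_neg.2 hx.2
      rw [slope_def_field, hv''x₁]
      have : v'' x - 0 = v'' x := by ring
      rw [this]
      exact (div_nonpos_iff.2 (Or.inl ⟨h1.le, h2.le⟩))
    linarith


lemma continuous_gg : Continuous gg :=
  continuous_iff_continuousAt.2 fun w => (hasDerivAt_gg w).continuousAt

noncomputable def FF (μ lam a : ℝ) : ℝ → ℝ :=
  fun z => μ * z + lam * Real.log (a * gg ((a/lam) * (1 - z)))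

noncomputable def FFd (μ lam a : ℝ) : ℝ → ℝ :=
  fun z => μ - a * (gg' ((a/lam) * (1 - z)) / gg ((a/lam) * (1 - z)))

lemma hasDerivAt_FF (μ lam a : ℝ) (hlam : 0 < lam) (ha : 0 < a) (z : ℝ) :
    HasDerivAt (FF μ lam a) (FFd μ lam a z) z := by
  set u : ℝ := (a/lam) * (1 - z) with hu
  have h1 : HasDerivAt (fun z : ℝ => (a/lam) * (1 - z)) (-(a/lam)) z := by
    simpa using ((hasDerivAt_id z).const_sub 1).const_mul (a/lam)
  have h2 : HasDerivAt (fun z : ℝ => gg ((a/lam) * (1 - z))) (gg' u * (-(a/lam))) z :=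
    HasDerivAt.comp (h₂ := gg) z (hasDerivAt_gg u) h1
  have h3 : HasDerivAt (fun z : ℝ => a * gg ((a/lam) * (1 - z)))
      (a * (gg' u * (-(a/lam)))) z := h2.const_mul a
  have hpos : 0 < a * gg u := mul_pos ha (gg_pos u)
  have h4 : HasDerivAt (fun z : ℝ => Real.log (a * gg ((a/lam) * (1 - z))))
      ((a * gg u)⁻¹ * (a * (gg' u * (-(a/lam))))) z :=
    HasDerivAt.comp (h₂ := Real.log) z (Real.hasDerivAt_log hpos.ne') h3
  have h5 : HasDerivAt (FF μ lam a)
      (μ + lam * ((a * gg u)⁻¹ * (a * (gg' u * (-(a/lam)))))) z := by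
    have := (hasDerivAt_id z).const_mul μ
    exact ((by simpa using (hasDerivAt_id z).const_mul μ : HasDerivAt (fun z : ℝ => μ * z) μ z).add (h4.const_mul lam))
  have hgne : gg u ≠ 0 := (gg_pos u).ne'
  refine h5.congr_deriv ?_
  rw [FFd]
  set G' : ℝ := gg' u with hG'
  set G : ℝ := gg u with hG
  field_simp
  ring

lemma continuous_FFd (μ lam a : ℝ) : Continuous (FFd μ lam a) := by
  apply continuous_const.sub
  apply continuous_const.mul
  apply Continuous.div
  · exact continuous_gg'.comp (by fun_prop)
  · exact continuous_gg.comp (by fun_prop)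
  · intro z
    exact (gg_pos _).ne'

lemma FF_eq (μ lam a : ℝ) (hlam : 0 < lam) (ha : 0 < a) (f : ℝ → ℝ)
    (hf : ∀ z : ℝ, z ≠ 1 →
      f z = μ * z + lam * Real.log (lam * (Real.exp ((a / lam) * (1 - z)) - 1) / (1 - z)))
    (hf1 : f 1 = μ + lam * Real.log a) : ∀ z, f z = FF μ lam a z := by
  intro z
  rcases eq_or_ne z 1 with rfl | hz
  · rw [hf1]
    simp [FF, gg]
  · rw [hf z hz, FF]
    have h1z : (1:ℝ) - z ≠ 0 := sub_ne_zero.2 (fun h => hz h.symm)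
    have hu : (a/lam) * (1 - z) ≠ 0 := mul_ne_zero (div_ne_zero ha.ne' hlam.ne') h1z
    have hgg : gg ((a/lam) * (1 - z)) = (Real.exp ((a/lam) * (1 - z)) - 1) / ((a/lam) * (1 - z)) :=
      if_neg hu
    congr 2
    rw [hgg]
    field_simp


set_option maxHeartbeats 1000000 in
theorem stmt_6 (μ σ c lam a : ℝ) (hσ : 0 < σ) (hc : 0 < c) (hlam : 0 < lam) (ha : 0 < a)
    (f : ℝ → ℝ)
    (hf : ∀ z : ℝ, z ≠ 1 →
      f z = μ * z + lam * Real.log (lam * (Real.exp ((a / lam) * (1 - z)) - 1) / (1 - z)))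
    (hf1 : f 1 = μ + lam * Real.log a)
    (v v' v'' v''' : ℝ → ℝ)
    (hd1 : ∀ x ∈ Set.Ici (0:ℝ), HasDerivWithinAt v (v' x) (Set.Ici 0) x)
    (hd2 : ∀ x ∈ Set.Ici (0:ℝ), HasDerivWithinAt v' (v'' x) (Set.Ici 0) x)
    (hd3 : ∀ x ∈ Set.Ici (0:ℝ), HasDerivWithinAt v'' (v''' x) (Set.Ici 0) x)
    (hcont : ContinuousOn v''' (Set.Ici 0))
    (hbdd : ∃ C : ℝ, ∀ x ∈ Set.Ici (0:ℝ), |v x| ≤ C)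
    (hode : ∀ x ∈ Set.Ici (0:ℝ), (1/2) * σ^2 * v'' x + f (v' x) - c * v x = 0)
    (hv0 : v 0 = 0) (hv'0 : 0 < v' 0) :
    (∀ x ∈ Set.Ici (0:ℝ), 0 < v' x) ∧ StrictMonoOn v (Set.Ici 0) ∧
    (∀ x ∈ Set.Ici (0:ℝ), v'' x ≤ 0) ∧ ConcaveOn ℝ (Set.Ici 0) v := by
  have hσ2 : (0:ℝ) < σ^2 := by positivity
  set k : ℝ := 2/σ^2 with hkdef
  have hk : 0 < k := by positivity
  have hfF : ∀ z, f z = FF μ lam a z := FF_eq μ lam a hlam ha f hf hf1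
  set F : ℝ → ℝ := FF μ lam a with hFdef
  set Fd : ℝ → ℝ := FFd μ lam a with hFddef
  have hF : ∀ z, HasDerivAt F (Fd z) z := fun z => hasDerivAt_FF μ lam a hlam ha z
  have hode' : ∀ x ∈ Set.Ici (0:ℝ), v'' x = k * (c * v x - F (v' x)) := by
    intro x hx
    have h := hode x hx
    rw [hfF] at h
    rw [hkdef]
    field_simp
    linarith
  have cv : ContinuousOn v (Set.Ici 0) := fun x hx => (hd1 x hx).continuousWithinAt
  have cv' : ContinuousOn v' (Set.Ici 0) := fun x hx => (hd2 x hx).continuousWithinAt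
  have cv'' : ContinuousOn v'' (Set.Ici 0) := fun x hx => (hd3 x hx).continuousWithinAt
  have hA : ∀ x ∈ Set.Ici (0:ℝ), 0 < v' x → v'' x ≤ 0 :=
    no_up k c hk hc F Fd hF v v' v'' v''' hd1 hd2 hd3 hbdd hode'
  have hB : ∀ x ∈ Set.Ici (0:ℝ), v' x < 0 → 0 ≤ v'' x := by
    have hF' : ∀ z, HasDerivAt (fun z => -(F (-z))) (Fd (-z)) z := by
      intro z
      have h1 : HasDerivAt (fun z : ℝ => F (-z)) (Fd (-z) * (-1)) z :=
        (hF (-z)).comp z (hasDerivAt_neg z)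
      simpa only [mul_neg, mul_one, neg_neg] using h1.fun_neg
    have h := no_up k c hk hc (fun z => -(F (-z))) (fun z => Fd (-z)) hF'
      (fun x => -(v x)) (fun x => -(v' x)) (fun x => -(v'' x)) (fun x => -(v''' x))
      (fun x hx => (hd1 x hx).neg) (fun x hx => (hd2 x hx).neg) (fun x hx => (hd3 x hx).neg)
      (by obtain ⟨C, hC⟩ := hbdd; exact ⟨C, fun x hx => by simpa [abs_neg] using hC x hx⟩)
      (by
        intro x hx
        have h2 := hode' x hx
        simp only [neg_neg]
        linarith)
    intro x hx hneg
    have h2 : -v'' x ≤ 0 := h x hx (show (0:ℝ) < -v' x by linarith)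
    linarith
  -- main positivity claim for v'
  have hpos : ∀ x ∈ Set.Ici (0:ℝ), 0 < v' x := by
    by_contra hcon
    push_neg at hcon
    obtain ⟨x₂, hx₂, hx₂le⟩ := hcon
    set T : Set ℝ := {x | 0 ≤ x ∧ v' x ≤ 0} with hTdef
    have hTne : T.Nonempty := ⟨x₂, hx₂, hx₂le⟩
    have hTbdd : BddBelow T := ⟨0, fun x hx => hx.1⟩
    have hTclosed : IsClosed T := by
      have : T = Set.Ici 0 ∩ (Set.Ici 0 ∩ v' ⁻¹' Set.Iic 0) := by
        ext x
        simp only [hTdef, Set.mem_setOf_eq, Set.mem_inter_iff, Set.mem_Ici, Set.mem_preimage,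
          Set.mem_Iic]
        tauto
      rw [this]
      exact isClosed_Ici.inter (cv'.preimage_isClosed_of_isClosed isClosed_Ici isClosed_Iic)
    set xs : ℝ := sInf T with hxsdef
    have hxsT : xs ∈ T := hTclosed.csInf_mem hTne hTbdd
    have h0xs : xs ∈ Set.Ici (0:ℝ) := hxsT.1
    have hxs0 : 0 < xs := by
      rcases lt_or_eq_of_le hxsT.1 with h | h
      · exact h
      · exfalso
        have hvT : v' xs ≤ 0 := hxsT.2
        rw [← h] at hvT
        linarith
    have hpos' : ∀ x ∈ Set.Ico 0 xs, 0 < v' x := by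
      intro x hx
      by_contra h
      push_neg at h
      exact absurd (csInf_le hTbdd ⟨hx.1, h⟩) (not_le.2 hx.2)
    have hIco : Set.Ico 0 xs ⊆ Set.Ici (0:ℝ) := fun y hy => hy.1
    have hIcc : Set.Icc 0 xs ⊆ Set.Ici (0:ℝ) := fun y hy => hy.1
    have hneIco : (𝓝[Set.Ico 0 xs] xs).NeBot := by
      apply mem_closure_iff_nhdsWithin_neBot.1
      rw [closure_Ico hxs0.ne]
      exact ⟨hxs0.le, le_refl _⟩
    have hv'xs : v' xs = 0 := by
      refine le_antisymm hxsT.2 ?_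
      exact ge_of_tendsto ((cv' xs h0xs).mono hIco).tendsto
        (eventually_mem_nhdsWithin.mono fun x hx => (hpos' x hx).le)
    have hv''xs_le : v'' xs ≤ 0 := by
      refine le_of_tendsto ((cv'' xs h0xs).mono hIco).tendsto
        (eventually_mem_nhdsWithin.mono fun x hx => ?_)
      exact hA x hx.1 (hpos' x hx)
    rcases lt_or_eq_of_le hv''xs_le with hlt | heq
    · -- v'' xs < 0 : just after xs, both v' and v'' are negative, contradiction
      have hIoi : Set.Ioi xs ⊆ Set.Ici (0:ℝ) := fun y hy => Set.mem_Ici.2 (le_trans (Set.mem_Ici.1 h0xs) (le_of_lt (Set.mem_Ioi.1 hy)))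
      have hneIoi : (𝓝[Set.Ioi xs] xs).NeBot := by
        apply mem_closure_iff_nhdsWithin_neBot.1
        rw [closure_Ioi]
        exact Set.self_mem_Ici
      have ev1 : ∀ᶠ y in 𝓝[Set.Ioi xs] xs, v'' y < 0 :=
        (((cv'' xs h0xs).mono hIoi).tendsto).eventually_lt_const hlt
      have hder : HasDerivWithinAt v' (v'' xs) (Set.Ioi xs) xs := (hd2 xs h0xs).mono hIoi
      rw [hasDerivWithinAt_iff_tendsto_slope] at hder
      have hdiff : Set.Ioi xs \ {xs} = Set.Ioi xs := Set.diff_singleton_eq_self (by simp)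
      rw [hdiff] at hder
      have ev2 : ∀ᶠ y in 𝓝[Set.Ioi xs] xs, slope v' xs y < 0 := hder.eventually_lt_const hlt
      obtain ⟨y, hy1, hy2, hy3⟩ := (ev1.and (ev2.and eventually_mem_nhdsWithin)).exists
      have hv'y : v' y < 0 := by
        rw [slope_def_field, hv'xs, sub_zero] at hy2
        rcases div_neg_iff.1 hy2 with ⟨h1, h2⟩ | ⟨h1, h2⟩
        · exfalso; rw [Set.mem_Ioi] at hy3; linarith [sub_pos.2 hy3]
        · exact h1
      exact absurd (hB y (hIoi hy3) hv'y) (not_le.2 hy1)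
    · -- v'' xs = 0 : use Gronwall backwards to show v' 0 = 0, contradiction
      have hcvxs : c * v xs = F 0 := by
        have h := hode' xs h0xs
        rw [hv'xs] at h
        have h2 : c * v xs - F 0 = 0 := by
          by_contra hne
          have : v'' xs ≠ 0 := by
            rw [h]; exact mul_ne_zero hk.ne' (by exact fun hh => hne hh)
          exact this heq
        linarith
      obtain ⟨M0, hM0⟩ := (isCompact_Icc (a := (0:ℝ)) (b := v' 0)).exists_bound_of_continuousOn
        (continuous_FFd μ lam a).continuousOn
      set M : ℝ := max M0 0 with hMdef
      have hM : 0 ≤ M := le_max_right _ _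
      have hFlip : ∀ p ∈ Set.Icc 0 (v' 0), |F p - F 0| ≤ M * |p| := by
        intro p hp
        have h0mem : (0:ℝ) ∈ Set.Icc 0 (v' 0) := ⟨le_refl 0, hv'0.le⟩
        have := Convex.norm_image_sub_le_of_norm_hasDerivWithin_le
          (f := F) (f' := Fd) (s := Set.Icc 0 (v' 0)) (C := M)
          (fun x _ => (hF x).hasDerivWithinAt)
          (fun x hx => le_trans (hM0 x hx) (le_max_left _ _)) (convex_Icc _ _) h0mem hp
        simpa [Real.norm_eq_abs] using this
      have hanti : AntitoneOn v' (Set.Icc 0 xs) := by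
        apply antitoneOn_of_hasDerivWithinAt_nonpos (convex_Icc 0 xs) (cv'.mono hIcc)
          (f' := v'')
        · intro x hx
          rw [interior_Icc] at hx ⊢
          exact (hd2 x (hIcc (Set.Ioo_subset_Icc_self hx))).mono
            (fun y hy => hIcc (Set.Ioo_subset_Icc_self hy))
        · intro x hx
          rw [interior_Icc] at hx
          exact hA x (le_of_lt hx.1) (hpos' x ⟨hx.1.le, hx.2⟩)
      have hrange : ∀ s ∈ Set.Icc 0 xs, v' s ∈ Set.Icc 0 (v' 0) := by
        intro s hs
        constructor
        · rcases eq_or_lt_of_le hs.2 with h | h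
          · rw [h, hv'xs]
          · exact (hpos' s ⟨hs.1, h⟩).le
        · exact hanti ⟨le_refl 0, hxs0.le⟩ hs hs.1
      set Y : ℝ → ℝ × ℝ := fun t => (v (xs - t) - v xs, v' (xs - t)) with hYdef
      set Y' : ℝ → ℝ × ℝ := fun t => (-v' (xs - t), -v'' (xs - t)) with hY'def
      set K : ℝ := 1 + k*c + k*M with hKdef
      have hmem : ∀ t ∈ Set.Icc 0 xs, xs - t ∈ Set.Icc 0 xs := fun t ht =>
        ⟨by linarith [ht.2], by linarith [ht.1]⟩
      have hYc : ContinuousOn Y (Set.Icc 0 xs) := by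
        have hmap : Continuous (fun t : ℝ => xs - t) := by fun_prop
        apply ContinuousOn.prodMk
        · exact (ContinuousOn.comp (cv.mono hIcc) hmap.continuousOn
            (fun t ht => hmem t ht)).sub continuousOn_const
        · exact ContinuousOn.comp (cv'.mono hIcc) hmap.continuousOn (fun t ht => hmem t ht)
      have hYd : ∀ t ∈ Set.Ico 0 xs, HasDerivWithinAt Y (Y' t) (Set.Ici t) t := by
        intro t ht
        have hst : xs - t ∈ Set.Ici (0:ℝ) := by
          simp only [Set.mem_Ici]; linarith [ht.2]
        have hmaps : Set.MapsTo (fun s : ℝ => xs - s) (Set.Icc t xs) (Set.Ici (0:ℝ)) := by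
          intro s hs
          simp only [Set.mem_Ici]
          have := hs.2
          linarith [ht.1, hs.1]
        have hφ : HasDerivWithinAt (fun s : ℝ => xs - s) (-1) (Set.Icc t xs) t := by
          simpa using ((hasDerivWithinAt_id t (Set.Icc t xs)).const_sub xs)
        have h1 : HasDerivWithinAt (v ∘ fun s : ℝ => xs - s) (v' (xs - t) * (-1))
            (Set.Icc t xs) t := (hd1 (xs - t) hst).comp t hφ hmaps
        have h2 : HasDerivWithinAt (v' ∘ fun s : ℝ => xs - s) (v'' (xs - t) * (-1))
            (Set.Icc t xs) t := (hd2 (xs - t) hst).comp t hφ hmaps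
        have hnb : Set.Icc t xs ∈ 𝓝[Set.Ici t] t := Icc_mem_nhdsGE_of_mem ⟨le_refl t, ht.2⟩
        have h1' := (h1.sub_const (v xs)).mono_of_mem_nhdsWithin hnb
        have h2' := h2.mono_of_mem_nhdsWithin hnb
        have hprod := h1'.prodMk h2'
        have e1 : v' (xs - t) * (-1) = -v' (xs - t) := by ring
        have e2 : v'' (xs - t) * (-1) = -v'' (xs - t) := by ring
        rw [e1, e2] at hprod
        exact hprod
      have hY0 : ‖Y 0‖ ≤ 0 := by
        have : Y 0 = (0, 0) := by
          simp only [hYdef, sub_zero, sub_self, hv'xs]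
        rw [this]
        simp [Prod.norm_def]
      have hbound : ∀ t ∈ Set.Ico 0 xs, ‖Y' t‖ ≤ K * ‖Y t‖ + 0 := by
        intro t ht
        have hsmem : xs - t ∈ Set.Icc 0 xs := ⟨by linarith [ht.2], by linarith [ht.1]⟩
        have h0mem' : xs - t ∈ Set.Ici (0:ℝ) := hsmem.1
        have hyn : 0 ≤ ‖Y t‖ := norm_nonneg _
        have n0 : |v (xs - t) - v xs| ≤ ‖Y t‖ := by
          have := norm_fst_le (Y t)
          simpa [hYdef, Real.norm_eq_abs] using this
        have n1 : |v' (xs - t)| ≤ ‖Y t‖ := by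
          have := norm_snd_le (Y t)
          simpa [hYdef, Real.norm_eq_abs] using this
        have hFb : |F (v' (xs - t)) - F 0| ≤ M * |v' (xs - t)| := hFlip _ (hrange _ hsmem)
        have hv''b : |v'' (xs - t)| ≤ (k*c + k*M) * ‖Y t‖ := by
          rw [hode' _ h0mem']
          have he : c * v (xs - t) - F (v' (xs - t))
              = c * (v (xs - t) - v xs) - (F (v' (xs - t)) - F 0) := by
            linarith [hcvxs]
          rw [he, abs_mul, abs_of_pos hk]
          have habs : |c * (v (xs - t) - v xs) - (F (v' (xs - t)) - F 0)|
              ≤ c * |v (xs - t) - v xs| + |F (v' (xs - t)) - F 0| := by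
            refine (abs_sub _ _).trans ?_
            rw [abs_mul, abs_of_pos hc]
          have hFb2 : |F (v' (xs - t)) - F 0| ≤ M * ‖Y t‖ :=
            hFb.trans (by nlinarith)
          calc k * |c * (v (xs - t) - v xs) - (F (v' (xs - t)) - F 0)|
              ≤ k * (c * |v (xs - t) - v xs| + |F (v' (xs - t)) - F 0|) :=
                mul_le_mul_of_nonneg_left habs hk.le
            _ ≤ k * (c * ‖Y t‖ + M * ‖Y t‖) := by
                have h1 : c * |v (xs - t) - v xs| ≤ c * ‖Y t‖ :=
                  mul_le_mul_of_nonneg_left n0 hc.le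
                have := mul_le_mul_of_nonneg_left (show c * |v (xs - t) - v xs| + |F (v' (xs - t)) - F 0| ≤ c * ‖Y t‖ + M * ‖Y t‖ by linarith) hk.le
                exact this
            _ = (k*c + k*M) * ‖Y t‖ := by ring
        have hKn : ‖Y' t‖ = max |v' (xs - t)| |v'' (xs - t)| := by
          simp [hY'def, Prod.norm_def, Real.norm_eq_abs, abs_neg]
        rw [hKn, add_zero]
        apply max_le
        · refine n1.trans ?_
          rw [hKdef]
          nlinarith [hyn, mul_pos hk hc, mul_nonneg hk.le hM]
        · refine hv''b.trans ?_
          rw [hKdef]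
          nlinarith [hyn]
      have hgron := norm_le_gronwallBound_of_norm_deriv_right_le (f := Y) (f' := Y')
        (δ := 0) (K := K) (ε := 0) (a := 0) (b := xs) hYc hYd hY0 hbound xs
        ⟨hxs0.le, le_refl xs⟩
      rw [gronwallBound_ε0_δ0] at hgron
      have : |v' 0| ≤ 0 := by
        have h2 := norm_snd_le (Y xs)
        have e : (Y xs).2 = v' 0 := by simp [hYdef]
        rw [e, Real.norm_eq_abs] at h2
        exact h2.trans hgron
      have := abs_nonneg (v' 0)
      have hv'00 : v' 0 = 0 := by
        have := abs_eq_zero.1 (le_antisymm ‹|v' 0| ≤ 0› (abs_nonneg _))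
        exact this
      linarith
  refine ⟨hpos, ?_, fun x hx => hA x hx (hpos x hx), ?_⟩
  · apply strictMonoOn_of_hasDerivWithinAt_pos (convex_Ici 0) cv (f' := v')
    · intro x hx
      rw [interior_Ici] at hx ⊢
      exact (hd1 x (Set.mem_Ici.2 (le_of_lt (Set.mem_Ioi.1 hx)))).mono (fun y hy => Set.mem_Ici.2 (le_of_lt (Set.mem_Ioi.1 hy)))
    · intro x hx
      rw [interior_Ici] at hx
      exact hpos x (Set.mem_Ici.2 (le_of_lt (Set.mem_Ioi.1 hx)))
  · apply concaveOn_of_hasDerivWithinAt2_nonpos (convex_Ici 0) cv (f' := v') (f'' := v'')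
    · intro x hx
      rw [interior_Ici] at hx ⊢
      exact (hd1 x (Set.mem_Ici.2 (le_of_lt (Set.mem_Ioi.1 hx)))).mono (fun y hy => Set.mem_Ici.2 (le_of_lt (Set.mem_Ioi.1 hy)))
    · intro x hx
      rw [interior_Ici] at hx ⊢
      exact (hd2 x (Set.mem_Ici.2 (le_of_lt (Set.mem_Ioi.1 hx)))).mono (fun y hy => Set.mem_Ici.2 (le_of_lt (Set.mem_Ioi.1 hy)))
    · intro x hx
      rw [interior_Ici] at hx
      exact hA x (Set.mem_Ici.2 (le_of_lt (Set.mem_Ioi.1 hx))) (hpos x (Set.mem_Ici.2 (le_of_lt (Set.mem_Ioi.1 hx))))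
end

section
/- Under the standing assumption (a > max{1, 2μ} and μ > max{c, σ²/2}, with σ, c, λ > 0), the function ψ̲(x) := 1 − e^{−x} satisfies the strict classical differential inequality (1/2)σ²·ψ̲''(x) + f(ψ̲'(x)) − c·ψ̲(x) > 0 for every x > 0, that is, −(1/2)σ² e^{−x} + f(e^{−x}) − c(1 − e^{−x}) > 0 for every x > 0; in particular ψ̲ is a viscosity subsolution on [0,∞) of the equation (1/2)σ² v''(x) + f(v'(x)) − c·v(x) = 0 with v(0) = 0. -/
open Topology Filter Set

lemma aux_exp (s : ℝ) (hs : 0 ≤ s) : s * Real.exp (s/2) ≤ Real.exp s - 1 := by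
  have hE := Real.quadratic_le_exp_of_nonneg (by linarith : (0:ℝ) ≤ s/2)
  have hs2 : Real.exp s = Real.exp (s/2) * Real.exp (s/2) := by
    rw [← Real.exp_add]; ring_nf
  set E := Real.exp (s/2) with hEdef
  have hD : 0 ≤ E - s/2 - 1 - s^2/8 := by nlinarith
  nlinarith [mul_nonneg hD (by positivity : (0:ℝ) ≤ 1 + s^2/8),
    sq_nonneg (E - s/2 - 1 - s^2/8), sq_nonneg (s^2)]

lemma sdtest {g g1 : ℝ → ℝ} {x d : ℝ} (hg : ∀ y, HasDerivAt g (g1 y) y)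
    (hd : HasDerivAt g1 d x) (hmax : IsLocalMax g x) : d ≤ 0 := by
  by_contra hpos
  push_neg at hpos
  have h0 : g1 x = 0 := hmax.hasDerivAt_eq_zero (hg x)
  have hslope := hasDerivAt_iff_tendsto_slope.mp hd
  have hsub : 𝓝[>] x ≤ 𝓝[≠] x := nhdsWithin_mono x fun y hy => ne_of_gt hy
  have h1 : ∀ᶠ y in 𝓝[>] x, 0 < g1 y := by
    have := (hslope.mono_left hsub).eventually (eventually_gt_nhds hpos)
    filter_upwards [this, self_mem_nhdsWithin] with y hy hy'
    rw [slope_def_field, h0, sub_zero] at hy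
    have hyx : 0 < y - x := sub_pos.mpr hy'
    have := mul_pos hy hyx
    rwa [div_mul_cancel₀] at this
    exact ne_of_gt hyx
  have h2 : ∀ᶠ y in 𝓝[>] x, g y ≤ g x := hmax.filter_mono nhdsWithin_le_nhds
  obtain ⟨u, hu, hsubs⟩ := mem_nhdsGT_iff_exists_Ioc_subset.mp (h1.and h2)
  have hxu : x < u := hu
  have hmono : StrictMonoOn g (Set.Icc x u) := by
    apply strictMonoOn_of_deriv_pos (convex_Icc x u)
    · exact fun y _ => ((hg y).differentiableAt.continuousAt).continuousWithinAt
    · intro z hz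
      rw [interior_Icc] at hz
      rw [(hg z).deriv]
      exact (hsubs ⟨hz.1, hz.2.le⟩).1
  have := hmono (Set.left_mem_Icc.mpr hxu.le) (Set.right_mem_Icc.mpr hxu.le) hxu
  exact absurd (hsubs ⟨hxu, le_refl u⟩).2 (not_le.mpr this)

lemma key_ineq (μ σ c lam a t : ℝ) (hc : 0 < c) (hlam : 0 < lam)
    (ha : max 1 (2 * μ) < a) (hμ : max c (σ ^ 2 / 2) < μ)
    (ht0 : 0 < t) (ht1 : t < 1) :
    0 < -(1/2) * σ^2 * t +
      (μ * t + lam * Real.log (lam * (Real.exp ((a / lam) * (1 - t)) - 1) / (1 - t)))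
      - c * (1 - t) := by
  have ha1 : 1 < a := lt_of_le_of_lt (le_max_left _ _) ha
  have ha2 : 2 * μ < a := lt_of_le_of_lt (le_max_right _ _) ha
  have hμc : c < μ := lt_of_le_of_lt (le_max_left _ _) hμ
  have hμσ : σ ^ 2 / 2 < μ := lt_of_le_of_lt (le_max_right _ _) hμ
  have ht : 0 < 1 - t := by linarith
  set s := (a / lam) * (1 - t) with hsdef
  have hs : 0 < s := mul_pos (div_pos (by linarith) hlam) ht
  have hls : lam * s = a * (1 - t) := by
    rw [hsdef]; field_simp
  have h1 : a * Real.exp (s/2) ≤ lam * (Real.exp s - 1) / (1 - t) := by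
    rw [le_div_iff₀ ht]
    calc a * Real.exp (s/2) * (1 - t) = lam * (s * Real.exp (s/2)) := by
          rw [show a * Real.exp (s/2) * (1 - t) = a * (1 - t) * Real.exp (s/2) from by ring,
            ← hls, mul_assoc]
      _ ≤ lam * (Real.exp s - 1) := by
          exact mul_le_mul_of_nonneg_left (aux_exp s hs.le) hlam.le
  have hpos : 0 < a * Real.exp (s/2) := by positivity
  have h2 : Real.log a + s/2 ≤ Real.log (lam * (Real.exp s - 1) / (1 - t)) := by
    have := Real.log_le_log hpos h1
    rwa [Real.log_mul (by linarith) (Real.exp_ne_zero _), Real.log_exp] at this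
  have hloga : 0 < Real.log a := Real.log_pos ha1
  have h3 : lam * (Real.log a + s/2) ≤
      lam * Real.log (lam * (Real.exp s - 1) / (1 - t)) :=
    mul_le_mul_of_nonneg_left h2 hlam.le
  nlinarith [h3, hls, mul_pos hlam hloga,
    mul_pos ht0 (show 0 < μ - σ^2/2 by linarith),
    mul_pos ht (show 0 < a/2 - c by linarith)]

theorem stmt_7 (μ σ c lam a : ℝ) (hσ : 0 < σ) (hc : 0 < c) (hlam : 0 < lam)
    (ha : max 1 (2 * μ) < a) (hμ : max c (σ ^ 2 / 2) < μ)
    (f : ℝ → ℝ)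
    (hf : ∀ z : ℝ, z ≠ 1 →
      f z = μ * z + lam * Real.log (lam * (Real.exp ((a / lam) * (1 - z)) - 1) / (1 - z)))
    (hf1 : f 1 = μ + lam * Real.log a) :
    (∀ x : ℝ, 0 < x →
      0 < -(1/2) * σ^2 * Real.exp (-x) + f (Real.exp (-x)) - c * (1 - Real.exp (-x))) ∧
    (∀ x : ℝ, 0 < x → ∀ φ : ℝ → ℝ, ContDiff ℝ 2 φ →
      (1 - Real.exp (-x)) - φ x = 0 →
      (∀ y : ℝ, 0 < y → (1 - Real.exp (-y)) - φ y ≤ 0) →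
      (1/2) * σ^2 * deriv (deriv φ) x + f (deriv φ x) - c * (1 - Real.exp (-x)) ≥ 0) := by
  have part1 : ∀ x : ℝ, 0 < x →
      0 < -(1/2) * σ^2 * Real.exp (-x) + f (Real.exp (-x)) - c * (1 - Real.exp (-x)) := by
    intro x hx
    have ht1 : Real.exp (-x) < 1 := Real.exp_lt_one_iff.mpr (by linarith)
    rw [hf _ (ne_of_lt ht1)]
    exact key_ineq μ σ c lam a (Real.exp (-x)) hc hlam ha hμ (Real.exp_pos _) ht1
  refine ⟨part1, ?_⟩
  intro x hx φ hφ htouch hle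
  have hφ1 : Differentiable ℝ φ := hφ.differentiable two_ne_zero
  have hφd : ContDiff ℝ 1 (deriv φ) := (contDiff_succ_iff_deriv.mp (show ContDiff ℝ (1+1 : ℕ∞) φ by exact_mod_cast hφ)).2.2
  have hφd1 : DifferentiableAt ℝ (deriv φ) x := (hφd.differentiable one_ne_zero).differentiableAt
  -- derivative of ψ y = 1 - exp(-y)
  have hψ : ∀ y : ℝ, HasDerivAt (fun y : ℝ => 1 - Real.exp (-y)) (Real.exp (-y)) y := by
    intro y
    have h1 : HasDerivAt (fun y : ℝ => -y) (-1) y := (hasDerivAt_id y).neg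
    have h2 := h1.exp
    have h3 := h2.const_sub 1
    simpa using h3
  have hg : ∀ y : ℝ, HasDerivAt (fun y => (1 - Real.exp (-y)) - φ y)
      (Real.exp (-y) - deriv φ y) y :=
    fun y => (hψ y).sub (hφ1 y).hasDerivAt
  have hmax : IsLocalMax (fun y => (1 - Real.exp (-y)) - φ y) x := by
    have hmem : Set.Ioi (0:ℝ) ∈ 𝓝 x := isOpen_Ioi.mem_nhds hx
    filter_upwards [hmem] with y hy
    rw [htouch]
    exact hle y hy
  -- first derivative zero
  have h0 : Real.exp (-x) - deriv φ x = 0 := hmax.hasDerivAt_eq_zero (hg x)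
  have hdx : deriv φ x = Real.exp (-x) := by linarith
  -- second derivative test
  have hψ' : HasDerivAt (fun y : ℝ => Real.exp (-y)) (-Real.exp (-x)) x := by
    have h1 : HasDerivAt (fun y : ℝ => -y) (-1) x := (hasDerivAt_id x).neg
    simpa using h1.exp
  have hg1 : HasDerivAt (fun y => Real.exp (-y) - deriv φ y)
      (-Real.exp (-x) - deriv (deriv φ) x) x := hψ'.sub hφd1.hasDerivAt
  have hsd : -Real.exp (-x) - deriv (deriv φ) x ≤ 0 := sdtest hg hg1 hmax
  have hfx := part1 x hx
  rw [hdx]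
  nlinarith [sq_nonneg σ, mul_le_mul_of_nonneg_left
    (show -Real.exp (-x) ≤ deriv (deriv φ) x by linarith)
    (show (0:ℝ) ≤ (1/2) * σ^2 by positivity)]
end

section
/- Under the standing assumption (a > max{1, 2μ} and μ > max{c, σ²/2}, with σ, c, λ > 0), let H ∈ (1, 1+λ) be the unique real number with f(H) = μ H, and let M, A, b > 0 be constants satisfying M > 2μ/σ², (1/M)·max{ ln(A/(A−M)), ln(A/(A−(f(0)/c)M)) } < b < (1/M)·min{ ln(A/H), ln(σ²M/(2μ)) }, and A > max{ M + H, (f(0)/c)M + H, σ²M²/(σ²M − 2μ), (f(0)/c)·σ²M²/(σ²M − 2μ) }. Then the function ψ̄(x) := (A/M)(1 − e^{−M·min(x,b)}) is a viscosity supersolution of (1/2)σ² v''(x) + f(v'(x)) − c·v(x) = 0 on [0,∞): for every x ∈ (0,∞) and every twice continuously differentiable φ : ℝ → ℝ such that ψ̄ − φ attains the minimum value 0 over (0,∞) at x, one has (1/2)σ² φ''(x) + f(φ'(x)) − c·ψ̄(x) ≤ 0. -/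
set_option maxHeartbeats 1000000

open Filter Set Real

lemma contDiff_one_deriv' {w : ℝ → ℝ} (hw : ContDiff ℝ 2 w) : ContDiff ℝ 1 (deriv w) := by
  have h : ContDiff ℝ ((1:ℕ) + 1) w := by exact_mod_cast hw
  exact (contDiff_succ_iff_deriv.mp h).2.2

lemma second_deriv_nonneg_of_isLocalMin' {w : ℝ → ℝ} {x : ℝ} (hw : ContDiff ℝ 2 w)
    (hmin : IsLocalMin w x) : 0 ≤ deriv (deriv w) x := by
  by_contra hneg
  push_neg at hneg
  have hd1 : deriv w x = 0 := hmin.deriv_eq_zero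
  have hdw : ContDiff ℝ 1 (deriv w) := contDiff_one_deriv' hw
  have hderiv2 : HasDerivAt (deriv w) (deriv (deriv w) x) x :=
    ((hdw.differentiable one_ne_zero) x).hasDerivAt
  have hslope : Tendsto (slope (deriv w) x) (nhdsWithin x (Ioi x)) (nhds (deriv (deriv w) x)) :=
    (hasDerivAt_iff_tendsto_slope.mp hderiv2).mono_left
      (nhdsWithin_mono x (fun y hy => ne_of_gt hy))
  have hev : ∀ᶠ y in nhdsWithin x (Ioi x), deriv w y < 0 := by
    filter_upwards [hslope.eventually_lt_const hneg, self_mem_nhdsWithin] with y hy hy'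
    rw [slope_def_field, hd1, sub_zero] at hy
    have hyx : 0 < y - x := sub_pos.mpr hy'
    by_contra h
    push_neg at h
    exact absurd (div_nonneg h hyx.le) (not_le.mpr hy)
  obtain ⟨u, hu, hsub⟩ := mem_nhdsGT_iff_exists_Ioo_subset.mp hev
  obtain ⟨ε, hε, hball⟩ := Metric.eventually_nhds_iff.mp hmin
  set z := min u (x + ε) with hz
  have hxz : x < z := lt_min hu (by linarith)
  set m := (x + z) / 2 with hm
  have hxm : x < m := by simp only [hm]; linarith
  have hmz : m < z := by simp only [hm]; linarith
  have hanti : StrictAntiOn w (Icc x m) := by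
    apply strictAntiOn_of_deriv_neg (convex_Icc x m) (hw.continuous.continuousOn)
    intro y hy
    rw [interior_Icc] at hy
    exact hsub ⟨hy.1, lt_trans hy.2 (lt_of_lt_of_le hmz (min_le_left _ _))⟩
  have h1 : w m < w x :=
    hanti (left_mem_Icc.mpr (le_of_lt hxm)) (right_mem_Icc.mpr (le_of_lt hxm)) hxm
  have h2 : w x ≤ w m := by
    apply hball
    rw [Real.dist_eq]
    have : m < x + ε := lt_of_lt_of_le hmz (min_le_right _ _)
    rw [abs_of_pos (by linarith)]
    linarith
  linarith

lemma ratio_anti' {k : ℝ} {s t : ℝ} (hs : 0 < s) (hst : s ≤ t) :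
    (1 - exp (-(k * t))) / t ≤ (1 - exp (-(k * s))) / s := by
  have ht : 0 < t := lt_of_lt_of_le hs hst
  set θ := s / t with hθ
  have hθ0 : 0 ≤ θ := by positivity
  have hθ1 : 0 ≤ 1 - θ := by
    have : θ ≤ 1 := by rw [hθ]; exact div_le_one_of_le₀ hst ht.le
    linarith
  have hsum : θ + (1 - θ) = 1 := by ring
  have hconv := convexOn_exp.2 (Set.mem_univ (-(k*t))) (Set.mem_univ 0) hθ0 hθ1 hsum
  simp only [smul_eq_mul, mul_zero, add_zero, Real.exp_zero, mul_one] at hconv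
  have harg : θ * -(k*t) = -(k*s) := by
    rw [hθ]; field_simp
  rw [harg] at hconv
  rw [div_le_div_iff₀ ht hs]
  have hts : s = θ * t := by rw [hθ]; field_simp
  nlinarith [hconv, Real.exp_pos (-(k*t)), ht]

theorem stmt_8 (μ σ c lam a : ℝ) (hσ : 0 < σ) (hc : 0 < c) (hlam : 0 < lam)
    (ha : max 1 (2 * μ) < a) (hμ : max c (σ ^ 2 / 2) < μ)
    (f : ℝ → ℝ)
    (hf : ∀ z : ℝ, z ≠ 1 →
      f z = μ * z + lam * Real.log (lam * (Real.exp ((a / lam) * (1 - z)) - 1) / (1 - z)))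
    (hf1 : f 1 = μ + lam * Real.log a)
    (H M A b : ℝ) (hH : f H = μ * H) (hHmem : H ∈ Set.Ioo 1 (1 + lam))
    (hMpos : 0 < M) (hApos : 0 < A) (hbpos : 0 < b)
    (hM : 2 * μ / σ^2 < M)
    (hb1 : (1/M) * max (Real.log (A / (A - M))) (Real.log (A / (A - (f 0 / c) * M))) < b)
    (hb2 : b < (1/M) * min (Real.log (A / H)) (Real.log (σ^2 * M / (2 * μ))))
    (hA : max (max (M + H) ((f 0 / c) * M + H))
        (max (σ^2 * M^2 / (σ^2 * M - 2 * μ)) ((f 0 / c) * (σ^2 * M^2 / (σ^2 * M - 2 * μ)))) < A) :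
    ∀ x : ℝ, 0 < x → ∀ φ : ℝ → ℝ, ContDiff ℝ 2 φ →
      (A / M) * (1 - Real.exp (-M * min x b)) - φ x = 0 →
      (∀ y : ℝ, 0 < y → 0 ≤ (A / M) * (1 - Real.exp (-M * min y b)) - φ y) →
      (1/2) * σ^2 * deriv (deriv φ) x + f (deriv φ x)
        - c * ((A / M) * (1 - Real.exp (-M * min x b))) ≤ 0 := by
  intro x hx φ hφ heq hmin
  have hσ2 : 0 < σ ^ 2 := by positivity
  have hcμ : c < μ := lt_of_le_of_lt (le_max_left _ _) hμ
  have hμpos : 0 < μ := lt_trans hc hcμ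
  have hσM : 2 * μ < σ ^ 2 * M := by
    have := (div_lt_iff₀ hσ2).mp hM
    linarith
  have ha0 : 0 < a := lt_trans (lt_of_lt_of_le zero_lt_one (le_max_left _ _)) ha
  have hH1 : (1:ℝ) < H := hHmem.1
  have hHpos : 0 < H := by linarith
  -- key fact: f z ≤ μ z for z ≥ H
  have hre : ∀ z : ℝ, 1 < z →
      lam * (Real.exp ((a / lam) * (1 - z)) - 1) / (1 - z)
        = lam * ((1 - Real.exp (-((a/lam) * (z - 1)))) / (z - 1)) := by
    intro z hz
    have h1 : (a/lam) * (1 - z) = -((a/lam) * (z - 1)) := by ring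
    rw [h1, mul_div_assoc]
    congr 1
    rw [div_eq_div_iff (by intro h; linarith [h] : (1:ℝ) - z ≠ 0) (by intro h; linarith [h] : (z:ℝ) - 1 ≠ 0)]
    ring
  have hRpos : ∀ z : ℝ, 1 < z →
      0 < lam * ((1 - Real.exp (-((a/lam) * (z - 1)))) / (z - 1)) := by
    intro z hz
    have h1 : -((a/lam) * (z - 1)) < 0 := by
      have : 0 < (a/lam) * (z - 1) := mul_pos (div_pos ha0 hlam) (by linarith)
      linarith
    have h2 : Real.exp (-((a/lam) * (z - 1))) < 1 := Real.exp_lt_one_iff.mpr h1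
    have h3 : 0 < z - 1 := by linarith
    exact mul_pos hlam (div_pos (by linarith) h3)
  have hQH : lam * ((1 - Real.exp (-((a/lam) * (H - 1)))) / (H - 1)) = 1 := by
    have hfH := hf H (ne_of_gt hH1)
    rw [hre H hH1] at hfH
    rw [hH] at hfH
    have hlog : Real.log (lam * ((1 - Real.exp (-((a/lam) * (H - 1)))) / (H - 1))) = 0 := by
      have : lam * Real.log (lam * ((1 - Real.exp (-((a/lam) * (H - 1)))) / (H - 1))) = 0 := by
        linarith
      exact (mul_eq_zero.mp this).resolve_left (ne_of_gt hlam)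
    have := Real.exp_log (hRpos H hH1)
    rw [hlog, Real.exp_zero] at this
    exact this.symm
  have key : ∀ p : ℝ, H ≤ p → f p ≤ μ * p := by
    intro p hp
    have hp1 : 1 < p := lt_of_lt_of_le hH1 hp
    rw [hf p (ne_of_gt hp1), hre p hp1]
    have hQp : lam * ((1 - Real.exp (-((a/lam) * (p - 1)))) / (p - 1)) ≤ 1 := by
      have hra := ratio_anti' (k := a/lam) (by linarith : 0 < H - 1) (by linarith : H - 1 ≤ p - 1)
      calc lam * ((1 - Real.exp (-((a/lam) * (p - 1)))) / (p - 1))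
          ≤ lam * ((1 - Real.exp (-((a/lam) * (H - 1)))) / (H - 1)) :=
            mul_le_mul_of_nonneg_left hra hlam.le
      _ = 1 := hQH
    have hlog : Real.log (lam * ((1 - Real.exp (-((a/lam) * (p - 1)))) / (p - 1))) ≤ 0 :=
      Real.log_nonpos (le_of_lt (hRpos p hp1)) hQp
    nlinarith [mul_nonpos_of_nonneg_of_nonpos (le_of_lt hlam) hlog]
  -- the smooth branch g and its derivatives
  set g : ℝ → ℝ := fun y => (A / M) * (1 - Real.exp (-M * y)) with hgdef
  have hgd : ∀ y : ℝ, HasDerivAt g (A * Real.exp (-M * y)) y := by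
    intro y
    have h1 : HasDerivAt (fun y : ℝ => -M * y) (-M) y := by
      simpa using (hasDerivAt_id y).const_mul (-M)
    have h2 : HasDerivAt (fun y : ℝ => Real.exp (-M * y)) (Real.exp (-M * y) * (-M)) y := h1.exp
    have h3 : HasDerivAt (fun y : ℝ => (A/M) * (1 - Real.exp (-M * y)))
        ((A/M) * (0 - Real.exp (-M * y) * (-M))) y :=
      HasDerivAt.const_mul (A/M) ((hasDerivAt_const y (1:ℝ)).sub h2)
    convert h3 using 1
    field_simp
    ring
  have hgd2 : ∀ y : ℝ, HasDerivAt (fun y => A * Real.exp (-M * y)) (-(M * (A * Real.exp (-M * y)))) y := by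
    intro y
    have h1 : HasDerivAt (fun y : ℝ => -M * y) (-M) y := by
      simpa using (hasDerivAt_id y).const_mul (-M)
    have h2 : HasDerivAt (fun y : ℝ => A * Real.exp (-M * y)) (A * (Real.exp (-M * y) * (-M))) y :=
      HasDerivAt.const_mul A h1.exp
    convert h2 using 1
    ring
  have hgC : ContDiff ℝ 2 g :=
    contDiff_const.mul (contDiff_const.sub (Real.contDiff_exp.comp (contDiff_const.mul contDiff_id)))
  have hφdiff : Differentiable ℝ φ := hφ.differentiable (by norm_num)
  have hφd1 : ContDiff ℝ 1 (deriv φ) := contDiff_one_deriv' hφ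
  have hφdd : Differentiable ℝ (deriv φ) := hφd1.differentiable one_ne_zero
  rcases lt_trichotomy x b with hxb | hxb | hxb
  · -- case x < b
    have hminxb : min x b = x := min_eq_left hxb.le
    rw [hminxb]
    rw [hminxb] at heq
    set w : ℝ → ℝ := fun y => g y - φ y with hwdef
    have hwx : w x = 0 := heq
    have hwmin : IsLocalMin w x := by
      have hmem : Ioo 0 b ∈ nhds x := Ioo_mem_nhds hx hxb
      apply Filter.eventually_of_mem hmem
      intro y hy
      have h1 := hmin y hy.1
      rw [min_eq_left (le_of_lt hy.2)] at h1
      rw [hwx]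
      exact h1
    have hwC : ContDiff ℝ 2 w := hgC.sub hφ
    -- first order
    have hderiv_w : ∀ y : ℝ, deriv w y = A * Real.exp (-M * y) - deriv φ y := by
      intro y
      have : HasDerivAt w (A * Real.exp (-M * y) - deriv φ y) y :=
        (hgd y).sub (hφdiff y).hasDerivAt
      exact this.deriv
    have hfo : deriv φ x = A * Real.exp (-M * x) := by
      have := hwmin.deriv_eq_zero
      rw [hderiv_w x] at this
      linarith
    -- second order
    have hso : deriv (deriv φ) x ≤ -(M * (A * Real.exp (-M * x))) := by
      have h0 := second_deriv_nonneg_of_isLocalMin' hwC hwmin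
      have hdw : deriv w = fun y => A * Real.exp (-M * y) - deriv φ y := funext hderiv_w
      rw [hdw] at h0
      have : HasDerivAt (fun y => A * Real.exp (-M * y) - deriv φ y)
          (-(M * (A * Real.exp (-M * x))) - deriv (deriv φ) x) x :=
        (hgd2 x).sub (hφdd x).hasDerivAt
      rw [this.deriv] at h0
      linarith
    set p := A * Real.exp (-M * x) with hpdef
    have hppos : 0 < p := by positivity
    -- p > H
    have hExb : Real.exp (-M * x) ≥ Real.exp (-M * b) := by
      apply Real.exp_le_exp.mpr
      rw [neg_mul, neg_mul, neg_le_neg_iff]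
      exact mul_le_mul_of_nonneg_left hxb.le hMpos.le
    have hMbH : H < A * Real.exp (-M * b) := by
      have h1 : M * b < Real.log (A / H) := by
        have h2 := lt_of_lt_of_le hb2 (by
          calc (1/M) * min (Real.log (A / H)) (Real.log (σ^2 * M / (2 * μ)))
              ≤ (1/M) * Real.log (A / H) := by
                apply mul_le_mul_of_nonneg_left (min_le_left _ _) (by positivity)
          )
        calc M * b = b * M := by ring
        _ < ((1/M) * Real.log (A / H)) * M := by
            exact mul_lt_mul_of_pos_right h2 hMpos
        _ = Real.log (A / H) := by field_simp
      have h3 : Real.exp (M * b) < A / H := by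
        have := Real.exp_lt_exp.mpr h1
        rwa [Real.exp_log (div_pos hApos hHpos)] at this
      have h4 : H * Real.exp (M * b) < A := by
        rw [lt_div_iff₀ hHpos] at h3
        linarith
      have h5 : Real.exp (M*b) * Real.exp (-M * b) = 1 := by
        rw [← Real.exp_add]
        norm_num
      have h6 := mul_lt_mul_of_pos_right h4 (Real.exp_pos (-M * b))
      calc H = H * (Real.exp (M*b) * Real.exp (-M * b)) := by rw [h5]; ring
      _ = H * Real.exp (M*b) * Real.exp (-M * b) := by ring
      _ < A * Real.exp (-M * b) := h6
    have hpH : H < p := by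
      rw [hpdef]
      calc H < A * Real.exp (-M * b) := hMbH
      _ ≤ A * Real.exp (-M * x) := by
          apply mul_le_mul_of_nonneg_left hExb (le_of_lt hApos)
    have hfp : f p ≤ μ * p := key p hpH.le
    -- ψ x ≥ 0
    have hE1 : Real.exp (-M * x) ≤ 1 := Real.exp_le_one_iff.mpr
      (by rw [neg_mul]; exact neg_nonpos.mpr (mul_pos hMpos hx).le)
    have hψ : 0 ≤ (A / M) * (1 - Real.exp (-M * x)) :=
      mul_nonneg (by positivity) (by linarith)
    rw [hfo]
    have t1 : (1/2) * σ^2 * deriv (deriv φ) x ≤ (1/2) * σ^2 * (-(M * p)) :=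
      mul_le_mul_of_nonneg_left hso (by positivity)
    have t2 : f p ≤ μ * p := hfp
    have t3 : 0 ≤ c * ((A / M) * (1 - Real.exp (-M * x))) := mul_nonneg hc.le hψ
    have t4 : (1/2) * σ^2 * (-(M * p)) + μ * p ≤ 0 := by
      have h9 : 0 ≤ p * (σ^2 * M - 2 * μ) := mul_nonneg hppos.le (by linarith)
      nlinarith [h9]
    linarith
  · -- case x = b : impossible (concave kink), derive False
    exfalso
    subst hxb
    have hφd : HasDerivAt φ (deriv φ x) x := (hφdiff x).hasDerivAt
    have hψx : φ x = (A / M) * (1 - Real.exp (-M * x)) := by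
      rw [min_self] at heq; linarith
    -- right: deriv φ x ≤ 0
    have hright : deriv φ x ≤ 0 := by
      have hslope : Tendsto (slope φ x) (nhdsWithin x (Ioi x)) (nhds (deriv φ x)) :=
        (hasDerivAt_iff_tendsto_slope.mp hφd).mono_left
          (nhdsWithin_mono x (fun y hy => ne_of_gt hy))
      refine le_of_tendsto hslope ?_
      filter_upwards [self_mem_nhdsWithin] with y hy
      have hy0 : 0 < y := lt_trans hx hy
      have h1 := hmin y hy0
      rw [min_eq_right (le_of_lt hy)] at h1
      rw [slope_def_field]
      apply div_nonpos_of_nonpos_of_nonneg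
      · rw [hψx]; linarith
      · have hxy : x < y := hy
        linarith
    -- left: deriv φ x ≥ A exp(-Mx)
    have hleft : A * Real.exp (-M * x) ≤ deriv φ x := by
      have hwd : HasDerivAt (fun y => g y - φ y) (A * Real.exp (-M * x) - deriv φ x) x :=
        (hgd x).sub hφd
      have hslope : Tendsto (slope (fun y => g y - φ y) x) (nhdsWithin x (Iio x))
          (nhds (A * Real.exp (-M * x) - deriv φ x)) :=
        (hasDerivAt_iff_tendsto_slope.mp hwd).mono_left
          (nhdsWithin_mono x (fun y hy => ne_of_lt hy))
      have hle : A * Real.exp (-M * x) - deriv φ x ≤ 0 := by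
        refine le_of_tendsto hslope ?_
        have hmem : Ioo 0 x ∈ nhdsWithin x (Iio x) := by
          rw [mem_nhdsLT_iff_exists_Ioo_subset]
          exact ⟨0, hx, fun y hy => hy⟩
        filter_upwards [hmem] with y hy
        have h1 := hmin y hy.1
        rw [min_eq_left (le_of_lt hy.2)] at h1
        rw [slope_def_field]
        apply div_nonpos_of_nonneg_of_nonpos
        · simp only [hgdef]
          rw [hψx]
          linarith
        · linarith [hy.2]
      linarith
    nlinarith [Real.exp_pos (-M * x)]
  · -- case x > b
    have hminxb : min x b = b := min_eq_right hxb.le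
    rw [hminxb]
    set K := (A / M) * (1 - Real.exp (-M * b)) with hK
    set w : ℝ → ℝ := fun y => K - φ y with hwdef
    have hwmin : IsLocalMin w x := by
      have hmem : Ioi b ∈ nhds x := Ioi_mem_nhds hxb
      apply Filter.eventually_of_mem hmem
      intro y hy
      have hy0 : 0 < y := lt_trans hbpos hy
      have h1 := hmin y hy0
      rw [min_eq_right (le_of_lt hy)] at h1
      have hwx : w x = 0 := by
        simp only [hwdef, hK]
        rw [hminxb] at heq
        linarith
      rw [hwx]
      exact h1
    have hwC : ContDiff ℝ 2 w := contDiff_const.sub hφ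
    have hfo : deriv φ x = 0 := by
      have := hwmin.deriv_eq_zero
      rw [show w = fun y => K - φ y from rfl] at this
      rw [deriv_const_sub] at this
      linarith
    have hso : deriv (deriv φ) x ≤ 0 := by
      have h0 := second_deriv_nonneg_of_isLocalMin' hwC hwmin
      have hdw : deriv w = fun y => -deriv φ y := by
        funext y
        exact deriv_const_sub K
      rw [hdw] at h0
      have hneg : deriv (fun y => -deriv φ y) x = -deriv (deriv φ) x := deriv.neg
      rw [hneg] at h0
      linarith
    rw [hfo]
    -- f 0 ≤ c * K
    have hD : 0 < A - (f 0 / c) * M := by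
      have h1 : (f 0 / c) * M + H ≤ max (max (M + H) ((f 0 / c) * M + H))
          (max (σ^2 * M^2 / (σ^2 * M - 2 * μ)) ((f 0 / c) * (σ^2 * M^2 / (σ^2 * M - 2 * μ)))) :=
        le_trans (le_max_right _ _) (le_max_left _ _)
      linarith [lt_of_le_of_lt h1 hA]
    have hfK : f 0 ≤ c * K := by
      have h1 : Real.log (A / (A - (f 0 / c) * M)) < M * b := by
        have h2 := lt_of_le_of_lt (by
          calc (1/M) * Real.log (A / (A - (f 0 / c) * M))
              ≤ (1/M) * max (Real.log (A / (A - M))) (Real.log (A / (A - (f 0 / c) * M))) := by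
                apply mul_le_mul_of_nonneg_left (le_max_right _ _) (by positivity)
          ) hb1
        calc Real.log (A / (A - (f 0 / c) * M))
            = ((1/M) * Real.log (A / (A - (f 0 / c) * M))) * M := by field_simp
        _ < b * M := mul_lt_mul_of_pos_right h2 hMpos
        _ = M * b := by ring
      have h3 : A / (A - (f 0 / c) * M) < Real.exp (M * b) := by
        have := Real.exp_lt_exp.mpr h1
        rwa [Real.exp_log (div_pos hApos hD)] at this
      have h4 : A < Real.exp (M * b) * (A - (f 0 / c) * M) :=
        (div_lt_iff₀ hD).mp h3
      have h5 : Real.exp (M*b) * Real.exp (-M * b) = 1 := by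
        rw [← Real.exp_add]; norm_num
      have h6 : A * Real.exp (-M * b) < A - (f 0 / c) * M := by
        have h7 := mul_lt_mul_of_pos_right h4 (Real.exp_pos (-M * b))
        calc A * Real.exp (-M * b)
            < Real.exp (M * b) * (A - (f 0 / c) * M) * Real.exp (-M * b) := h7
        _ = (A - (f 0 / c) * M) * (Real.exp (M*b) * Real.exp (-M * b)) := by ring
        _ = A - (f 0 / c) * M := by rw [h5]; ring
      have h7 : f 0 / c * M < A * (1 - Real.exp (-M * b)) := by nlinarith
      have h8 : f 0 / c < (A / M) * (1 - Real.exp (-M * b)) := by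
        rw [div_mul_eq_mul_div, lt_div_iff₀ hMpos]
        nlinarith
      rw [hK]
      calc f 0 = (f 0 / c) * c := by field_simp
      _ ≤ ((A / M) * (1 - Real.exp (-M * b))) * c := by
          apply mul_le_mul_of_nonneg_right (le_of_lt h8) (le_of_lt hc)
      _ = c * ((A / M) * (1 - Real.exp (-M * b))) := by ring
    have : (1/2) * σ^2 * deriv (deriv φ) x ≤ 0 :=
      mul_nonpos_of_nonneg_of_nonpos (by positivity) hso
    linarith
end

section
/- Let z ∈ ℝ with z ≠ 1. For every measurable function π : [0,a] → (0,∞) with ∫₀^a π(w) dw = 1 and ∫₀^a |ln π(w)|·π(w) dw < ∞, one has ∫₀^a ( (1−z)·w − λ·ln π(w) )·π(w) dw ≤ λ·ln( λ(e^{(a/λ)(1−z)} − 1)/(1−z) ), and equality holds for the Gibbs density π(w) = G(w, 1−z). -/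
open MeasureTheory

set_option maxHeartbeats 1000000 in
theorem stmt_16 (lam a : ℝ) (hlam : 0 < lam) (ha : 0 < a) (z : ℝ) (hz : z ≠ 1)
    (G : ℝ → ℝ → ℝ)
    (hG : ∀ w y : ℝ, y ≠ 0 →
      G w y = y * Real.exp ((w / lam) * y) / (lam * (Real.exp ((a / lam) * y) - 1)))
    (hG0 : ∀ w : ℝ, G w 0 = 1 / a)
    (pdf : ℝ → ℝ) (hmeas : Measurable pdf)
    (hpos : ∀ w ∈ Set.Icc (0:ℝ) a, 0 < pdf w)
    (hint : IntervalIntegrable pdf volume 0 a)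
    (hone : (∫ w in (0:ℝ)..a, pdf w) = 1)
    (hlog : IntervalIntegrable (fun w => |Real.log (pdf w)| * pdf w) volume 0 a) :
    (∫ w in (0:ℝ)..a, ((1 - z) * w - lam * Real.log (pdf w)) * pdf w)
      ≤ lam * Real.log (lam * (Real.exp ((a / lam) * (1 - z)) - 1) / (1 - z)) ∧
    (∫ w in (0:ℝ)..a, ((1 - z) * w - lam * Real.log (G w (1 - z))) * G w (1 - z))
      = lam * Real.log (lam * (Real.exp ((a / lam) * (1 - z)) - 1) / (1 - z)) := by
  set y := 1 - z with hy_def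
  have hy : y ≠ 0 := sub_ne_zero_of_ne (Ne.symm hz)
  set C := lam * (Real.exp ((a / lam) * y) - 1) / y with hC_def
  have hC : 0 < C := by
    rcases lt_or_gt_of_ne hy with hyneg | hypos
    · have h1 : (a / lam) * y < 0 := mul_neg_of_pos_of_neg (div_pos ha hlam) hyneg
      have h2 : Real.exp ((a / lam) * y) < 1 := Real.exp_lt_one_iff.mpr h1
      exact div_pos_of_neg_of_neg (mul_neg_of_pos_of_neg hlam (by linarith)) hyneg
    · have h1 : 0 < (a / lam) * y := mul_pos (div_pos ha hlam) hypos
      have h2 : 1 < Real.exp ((a / lam) * y) := by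
        rw [show (1:ℝ) = Real.exp 0 by simp]
        exact Real.exp_lt_exp.mpr h1
      exact div_pos (mul_pos hlam (by linarith)) hypos
  have hne : Real.exp ((a / lam) * y) - 1 ≠ 0 := by
    intro h
    rw [hC_def, h] at hC
    simp at hC
  have hGform : ∀ w, G w y = Real.exp ((y / lam) * w) / C := by
    intro w
    rw [hG w y hy, hC_def]
    rw [show (w / lam) * y = (y / lam) * w by ring]
    field_simp
  have hGpos : ∀ w, 0 < G w y := fun w => by
    rw [hGform]; exact div_pos (Real.exp_pos _) hC
  have hintexp : (∫ w in (0:ℝ)..a, Real.exp ((y / lam) * w)) = C := by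
    have hderiv : ∀ w : ℝ, HasDerivAt (fun x => Real.exp ((y / lam) * x) * (lam / y))
        (Real.exp ((y / lam) * w)) w := by
      intro w
      have h1 : HasDerivAt (fun x : ℝ => (y / lam) * x) (y / lam) w := by
        simpa using (hasDerivAt_id w).const_mul (y / lam)
      have h2 := (h1.exp).mul_const (lam / y)
      exact h2.congr_deriv (by rw [mul_assoc, div_mul_div_comm, mul_comm y lam, div_self (mul_ne_zero hlam.ne' hy), mul_one])
    have hcont : Continuous fun w => Real.exp ((y / lam) * w) := by continuity
    rw [intervalIntegral.integral_eq_sub_of_hasDerivAt (fun w _ => hderiv w)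
      (hcont.intervalIntegrable 0 a)]
    rw [hC_def, show (y / lam) * a = (a / lam) * y by ring]
    simp [Real.exp_zero]
    ring
  have hGcont : Continuous fun w => G w y := by
    simp only [hGform]; continuity
  have hGint : (∫ w in (0:ℝ)..a, G w y) = 1 := by
    simp only [hGform]
    rw [intervalIntegral.integral_div, hintexp, div_self hC.ne']
  have hlogG : ∀ w, Real.log (G w y) = (y / lam) * w - Real.log C := by
    intro w
    rw [hGform, Real.log_div (Real.exp_pos _).ne' hC.ne', Real.log_exp]
  constructor
  · -- inequality part
    have hwp : IntervalIntegrable (fun w => w * pdf w) volume 0 a := by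
      apply (hint.const_mul a).mono_fun ((measurable_id.mul hmeas).aestronglyMeasurable)
      rw [Set.uIoc_of_le ha.le]
      filter_upwards [ae_restrict_mem measurableSet_Ioc] with w hw
      have hp := hpos w ⟨hw.1.le, hw.2⟩
      simp only [Real.norm_eq_abs, abs_mul, id]
      rw [Pi.mul_apply, id_eq, abs_mul, abs_of_pos hp, abs_of_pos hw.1, abs_of_pos ha]
      exact mul_le_mul_of_nonneg_right hw.2 hp.le
    have hlp : IntervalIntegrable (fun w => Real.log (pdf w) * pdf w) volume 0 a := by
      apply hlog.mono_fun ((hmeas.log.mul hmeas).aestronglyMeasurable)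
      rw [Set.uIoc_of_le ha.le]
      filter_upwards [ae_restrict_mem measurableSet_Ioc] with w hw
      have hp := hpos w ⟨hw.1.le, hw.2⟩
      simp only [Real.norm_eq_abs, abs_mul, abs_abs]
      exact le_of_eq (by rw [Pi.mul_apply, abs_mul, abs_of_pos hp])
    have hlhs : IntervalIntegrable (fun w => (y * w - lam * Real.log (pdf w)) * pdf w)
        volume 0 a := by
      have heq : (fun w => (y * w - lam * Real.log (pdf w)) * pdf w)
          = fun w => y * (w * pdf w) - lam * (Real.log (pdf w) * pdf w) := by
        funext w; ring
      rw [heq]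
      exact (hwp.const_mul y).sub (hlp.const_mul lam)
    have hGii : IntervalIntegrable (fun w => G w y) volume 0 a := hGcont.intervalIntegrable 0 a
    have hrhs : IntervalIntegrable
        (fun w => (lam * Real.log C) * pdf w + lam * (G w y - pdf w)) volume 0 a :=
      (hint.const_mul _).add ((hGii.sub hint).const_mul lam)
    have hpt : ∀ w ∈ Set.Icc (0:ℝ) a,
        (y * w - lam * Real.log (pdf w)) * pdf w
          ≤ (lam * Real.log C) * pdf w + lam * (G w y - pdf w) := by
      intro w hw
      have hp := hpos w hw
      have hg := hGpos w
      have key : pdf w * Real.log (G w y / pdf w) ≤ G w y - pdf w := by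
        have h1 := Real.log_le_sub_one_of_pos (div_pos hg hp)
        have h2 := mul_le_mul_of_nonneg_left h1 hp.le
        rwa [mul_sub, mul_one, mul_div_cancel₀ _ hp.ne'] at h2
      rw [Real.log_div hg.ne' hp.ne', hlogG w] at key
      have h4 := mul_le_mul_of_nonneg_left key hlam.le
      have h5 : lam * (pdf w * ((y / lam) * w - Real.log C - Real.log (pdf w)))
          = y * w * pdf w - lam * Real.log C * pdf w - lam * Real.log (pdf w) * pdf w := by
        field_simp
      have hgoal : (y * w - lam * Real.log (pdf w)) * pdf w
          = y * w * pdf w - lam * Real.log (pdf w) * pdf w := by ring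
      rw [h5] at h4
      rw [hgoal]
      linarith [h4]
    have hmono := intervalIntegral.integral_mono_on ha.le hlhs hrhs hpt
    rw [intervalIntegral.integral_add (hint.const_mul _) ((hGii.sub hint).const_mul lam),
      intervalIntegral.integral_const_mul, intervalIntegral.integral_const_mul,
      intervalIntegral.integral_sub hGii hint, hGint, hone] at hmono
    simpa using hmono
  · -- equality part
    have hEq : Set.EqOn (fun w => (y * w - lam * Real.log (G w y)) * G w y)
        (fun w => (lam * Real.log C) * G w y) (Set.uIcc 0 a) := by
      intro w _
      simp only
      have h3 : lam * ((y / lam) * w) = y * w := by field_simp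
      rw [hlogG w, mul_sub, h3]
      ring
    rw [intervalIntegral.integral_congr hEq, intervalIntegral.integral_const_mul, hGint, mul_one]
end

section
/- (Deterministic core of the policy improvement theorem.) Under the standing assumption (a > max{1, 2μ} and μ > max{c, σ²/2}, with σ, c, λ > 0), let π : [0,a] × [0,∞) → (0,∞) be measurable such that for every x ≥ 0, w ↦ π(w,x) is a probability density on [0,a] with ∫₀^a |ln π(w,x)|·π(w,x) dw < ∞, and define b^π(x) := μ − ∫₀^a w·π(w,x) dw and r^π(x) := ∫₀^a ( w − λ·ln π(w,x) )·π(w,x) dw. Suppose J : [0,∞) → ℝ is twice continuously differentiable and satisfies (1/2)σ² J''(x) + b^π(x) J'(x) − c J(x) + r^π(x) = 0 for all x ≥ 0. Define the improved policy π̃(w,x) := G(w, 1 − J'(x)). Then (1/2)σ² J''(x) + b^{π̃}(x) J'(x) − c J(x) + r^{π̃}(x) ≥ 0 for all x ≥ 0, where b^{π̃} and r^{π̃} are defined from π̃ in the same way. -/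
open MeasureTheory

theorem stmt_18 (μ σ c lam a : ℝ) (hσ : 0 < σ) (hc : 0 < c) (hlam : 0 < lam)
    (ha : max 1 (2 * μ) < a) (hμ : max c (σ ^ 2 / 2) < μ)
    (G : ℝ → ℝ → ℝ)
    (hG : ∀ w y : ℝ, y ≠ 0 →
      G w y = y * Real.exp ((w / lam) * y) / (lam * (Real.exp ((a / lam) * y) - 1)))
    (hG0 : ∀ w : ℝ, G w 0 = 1 / a)
    (p : ℝ → ℝ → ℝ) (hpmeas : Measurable fun q : ℝ × ℝ => p q.1 q.2)
    (hppos : ∀ x ∈ Set.Ici (0:ℝ), ∀ w ∈ Set.Icc (0:ℝ) a, 0 < p w x)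
    (hpint : ∀ x ∈ Set.Ici (0:ℝ), IntervalIntegrable (fun w => p w x) volume 0 a)
    (hpone : ∀ x ∈ Set.Ici (0:ℝ), (∫ w in (0:ℝ)..a, p w x) = 1)
    (hplog : ∀ x ∈ Set.Ici (0:ℝ),
      IntervalIntegrable (fun w => |Real.log (p w x)| * p w x) volume 0 a)
    (J : ℝ → ℝ) (hJ : ContDiff ℝ 2 J)
    (hODE : ∀ x ∈ Set.Ici (0:ℝ),
      (1/2) * σ^2 * deriv (deriv J) x
        + (μ - ∫ w in (0:ℝ)..a, w * p w x) * deriv J x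
        - c * J x + (∫ w in (0:ℝ)..a, (w - lam * Real.log (p w x)) * p w x) = 0) :
    ∀ x ∈ Set.Ici (0:ℝ),
      0 ≤ (1/2) * σ^2 * deriv (deriv J) x
        + (μ - ∫ w in (0:ℝ)..a, w * G w (1 - deriv J x)) * deriv J x
        - c * J x
        + (∫ w in (0:ℝ)..a,
            (w - lam * Real.log (G w (1 - deriv J x))) * G w (1 - deriv J x)) := by
  intro x hx
  have ha1 : (1:ℝ) < a := lt_of_le_of_lt (le_max_left 1 (2*μ)) ha
  have ha0 : (0:ℝ) < a := lt_trans one_pos ha1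
  have hlam' : lam ≠ 0 := ne_of_gt hlam
  have hode := hODE x hx
  set d : ℝ := deriv J x with hd
  set y : ℝ := 1 - d with hy
  set Z : ℝ := ∫ w in (0:ℝ)..a, Real.exp (w * y / lam) with hZdef
  have hcexp : Continuous fun w : ℝ => Real.exp (w * y / lam) :=
    Real.continuous_exp.comp ((continuous_id.mul continuous_const).div_const lam)
  have hZpos : 0 < Z := by
    rw [hZdef]
    exact intervalIntegral.intervalIntegral_pos_of_pos (hcexp.intervalIntegrable 0 a)
      (fun w => Real.exp_pos _) ha0
  -- G equals the normalized exponential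
  have hGZ : ∀ w : ℝ, G w y = Real.exp (w * y / lam) / Z := by
    rcases eq_or_ne y 0 with hy0 | hy0
    · intro w
      have hZa : Z = a := by
        rw [hZdef]; simp [hy0]
      rw [hy0, hG0, hZa]
      simp [hy0]
    · have hZval : Z = lam / y * (Real.exp (a * y / lam) - 1) := by
        have hF : ∀ t ∈ Set.uIcc (0:ℝ) a,
            HasDerivAt (fun w : ℝ => lam / y * Real.exp (w * y / lam))
              (Real.exp (t * y / lam)) t := by
          intro t _
          have h1 : HasDerivAt (fun w : ℝ => w * y / lam) (y / lam) t := by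
            simpa [mul_div_assoc] using (hasDerivAt_id t).mul_const (y / lam)
          have h3 := (h1.exp).const_mul (lam / y)
          refine h3.congr_deriv ?_
          field_simp
        have := intervalIntegral.integral_eq_sub_of_hasDerivAt hF
          (hcexp.intervalIntegrable 0 a)
        rw [hZdef, this]
        simp [mul_sub]
      intro w
      have hE : Real.exp (a * y / lam) - 1 ≠ 0 := by
        refine sub_ne_zero.mpr fun h => hy0 ?_
        have h2 := (Real.exp_eq_one_iff _).mp h
        have h3 : a * y = 0 := by
          have h4 := congrArg (· * lam) h2
          simpa [div_mul_cancel₀, hlam'] using h4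
        rcases mul_eq_zero.mp h3 with h' | h'
        · exact absurd h' (ne_of_gt ha0)
        · exact h'
      rw [hG w y hy0, hZval]
      have e1 : (w / lam) * y = w * y / lam := by ring
      have e2 : (a / lam) * y = a * y / lam := by ring
      rw [e1, e2]
      field_simp
  simp only [hGZ]
  have hlogg : ∀ w : ℝ, Real.log (Real.exp (w * y / lam) / Z)
      = w * y / lam - Real.log Z := fun w => by
    rw [Real.log_div (Real.exp_ne_zero _) hZpos.ne', Real.log_exp]
  have hgint : (∫ w in (0:ℝ)..a, Real.exp (w * y / lam) / Z) = 1 := by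
    rw [intervalIntegral.integral_div, ← hZdef]
    exact div_self hZpos.ne'
  have hGi1 : IntervalIntegrable (fun w => w * (Real.exp (w * y / lam) / Z)) volume 0 a :=
    (continuous_id.mul (hcexp.div_const Z)).intervalIntegrable 0 a
  have hGi2 : IntervalIntegrable (fun w => Real.exp (w * y / lam) / Z) volume 0 a :=
    (hcexp.div_const Z).intervalIntegrable 0 a
  -- Gibbs side value
  have hS2 : (∫ w in (0:ℝ)..a, (w - lam * Real.log (Real.exp (w * y / lam) / Z))
        * (Real.exp (w * y / lam) / Z))
      = d * (∫ w in (0:ℝ)..a, w * (Real.exp (w * y / lam) / Z)) + lam * Real.log Z := by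
    have hfun : ∀ w : ℝ, (w - lam * Real.log (Real.exp (w * y / lam) / Z))
        * (Real.exp (w * y / lam) / Z)
        = d * (w * (Real.exp (w * y / lam) / Z))
          + (lam * Real.log Z) * (Real.exp (w * y / lam) / Z) := by
      intro w
      rw [hlogg w, hy]
      field_simp
      ring
    simp only [hfun]
    rw [intervalIntegral.integral_add (hGi1.const_mul d) (hGi2.const_mul (lam * Real.log Z)),
      intervalIntegral.integral_const_mul, intervalIntegral.integral_const_mul, hgint, mul_one]
  -- p side integrability
  have hqmeas : Measurable fun w : ℝ => p w x :=
    hpmeas.comp (measurable_id.prodMk measurable_const)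
  have hqI : IntervalIntegrable (fun w => p w x) volume 0 a := hpint x hx
  have hqOn : IntegrableOn (fun w => p w x) (Set.Ioc 0 a) :=
    (intervalIntegrable_iff_integrableOn_Ioc_of_le ha0.le).mp hqI
  have hwqI : IntervalIntegrable (fun w => w * p w x) volume 0 a := by
    rw [intervalIntegrable_iff_integrableOn_Ioc_of_le ha0.le]
    refine (hqOn.const_mul a).mono ((measurable_id.mul hqmeas).aestronglyMeasurable) ?_
    refine (ae_restrict_iff' measurableSet_Ioc).mpr (ae_of_all _ fun w hw => ?_)
    have hpw : 0 < p w x := hppos x hx w ⟨hw.1.le, hw.2⟩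
    rw [Real.norm_eq_abs, Real.norm_eq_abs, abs_mul, abs_mul, abs_of_pos hpw,
      abs_of_nonneg hw.1.le, abs_of_pos ha0]
    exact mul_le_mul_of_nonneg_right hw.2 hpw.le
  have hlqI : IntervalIntegrable (fun w => Real.log (p w x) * p w x) volume 0 a := by
    rw [intervalIntegrable_iff_integrableOn_Ioc_of_le ha0.le]
    have hLOn := (intervalIntegrable_iff_integrableOn_Ioc_of_le ha0.le).mp (hplog x hx)
    refine Integrable.mono hLOn ((hqmeas.log.mul hqmeas).aestronglyMeasurable)
      (ae_of_all _ fun w => ?_)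
    rw [Real.norm_eq_abs, Real.norm_eq_abs, abs_mul, abs_mul, abs_abs]
  have hpone' := hpone x hx
  -- rewrite p-side reward integral
  have hP2 : (∫ w in (0:ℝ)..a, (w - lam * Real.log (p w x)) * p w x)
      = (∫ w in (0:ℝ)..a, w * p w x)
        - lam * (∫ w in (0:ℝ)..a, Real.log (p w x) * p w x) := by
    have hfun : ∀ w : ℝ, (w - lam * Real.log (p w x)) * p w x
        = w * p w x - lam * (Real.log (p w x) * p w x) := fun w => by ring
    simp only [hfun]
    rw [intervalIntegral.integral_sub hwqI (hlqI.const_mul lam),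
      intervalIntegral.integral_const_mul]
  -- the Gibbs variational inequality
  have hkey : y * (∫ w in (0:ℝ)..a, w * p w x)
      - lam * (∫ w in (0:ℝ)..a, Real.log (p w x) * p w x)
      - lam * Real.log Z ≤ 0 := by
    have hFI : IntervalIntegrable (fun w => y * (w * p w x)
        - lam * (Real.log (p w x) * p w x) - (lam * Real.log Z) * p w x) volume 0 a :=
      ((hwqI.const_mul y).sub (hlqI.const_mul lam)).sub (hqI.const_mul (lam * Real.log Z))
    have hGI : IntervalIntegrable (fun w => lam * (Real.exp (w * y / lam) / Z)
        - lam * p w x) volume 0 a :=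
      (hGi2.const_mul lam).sub (hqI.const_mul lam)
    have hptw : ∀ w ∈ Set.Icc (0:ℝ) a,
        y * (w * p w x) - lam * (Real.log (p w x) * p w x) - (lam * Real.log Z) * p w x
          ≤ lam * (Real.exp (w * y / lam) / Z) - lam * p w x := by
      intro w hw
      have hpw : 0 < p w x := hppos x hx w hw
      have ht : 0 < Real.exp (w * y / lam) / (Z * p w x) := by positivity
      have h1 := Real.log_le_sub_one_of_pos ht
      rw [Real.log_div (Real.exp_ne_zero _) (by positivity), Real.log_exp,
        Real.log_mul hZpos.ne' hpw.ne'] at h1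
      have h2 := mul_le_mul_of_nonneg_left h1
        (le_of_lt (mul_pos hlam hpw))
      have e1 : lam * p w x * (w * y / lam - (Real.log Z + Real.log (p w x)))
          = y * (w * p w x) - lam * (Real.log (p w x) * p w x)
            - (lam * Real.log Z) * p w x := by
        field_simp [hlam', hpw.ne']
        ring
      have e2 : lam * p w x * (Real.exp (w * y / lam) / (Z * p w x) - 1)
          = lam * (Real.exp (w * y / lam) / Z) - lam * p w x := by
        field_simp [hpw.ne', hZpos.ne']
      rw [e1, e2] at h2
      exact h2
    have hmono := intervalIntegral.integral_mono_on ha0.le hFI hGI hptw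
    rw [intervalIntegral.integral_sub ((hwqI.const_mul y).sub (hlqI.const_mul lam))
        (hqI.const_mul (lam * Real.log Z)),
      intervalIntegral.integral_sub (hwqI.const_mul y) (hlqI.const_mul lam),
      intervalIntegral.integral_sub (hGi2.const_mul lam) (hqI.const_mul lam),
      intervalIntegral.integral_const_mul, intervalIntegral.integral_const_mul,
      intervalIntegral.integral_const_mul, intervalIntegral.integral_const_mul,
      intervalIntegral.integral_const_mul, hpone', hgint] at hmono
    linarith
  -- assemble
  rw [hS2]
  rw [hP2] at hode
  set S1 := ∫ w in (0:ℝ)..a, w * (Real.exp (w * y / lam) / Z) with hS1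
  set P1 := ∫ w in (0:ℝ)..a, w * p w x with hP1
  set LQ := ∫ w in (0:ℝ)..a, Real.log (p w x) * p w x with hLQ
  have e1 : (μ - S1) * d = μ * d - d * S1 := by ring
  have e2 : (μ - P1) * d = μ * d - d * P1 := by ring
  have e3 : y * P1 = P1 - d * P1 := by rw [hy]; ring
  linarith
end

section
/- Let Θ ⊆ ℝ^l, let f : Θ → ℝ be continuous, and for each h > 0 let r_h : Θ → ℝ be continuous with f_h := f + r_h, where r_h → 0 uniformly on every compact subset of Θ as h → 0. Suppose (h_n)_{n≥0} is a sequence of positive numbers decreasing to 0 such that for each n the set argmin_{θ∈Θ} f_{h_n}(θ) is nonempty, let θ_n ∈ argmin_{θ∈Θ} f_{h_n}(θ), and let θ* ∈ Θ be a limit point of the sequence (θ_n). Then θ* ∈ argmin_{θ∈Θ} f(θ), i.e. f(θ*) ≤ f(θ) for all θ ∈ Θ. -/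
/-! The perturbations `r (h (φ n))` tend to `0` uniformly on the compact set formed by `θ`, `θstar`
and the subsequence, so both sides of the minimality inequality
`f θₙ + r (hₙ) θₙ ≤ f θ + r (hₙ) θ` converge along the subsequence, to `f θstar` and `f θ`. -/

open Filter Set Topology

theorem le_of_add_le_add_of_tendstoUniformlyOn {ι X : Type*} [TopologicalSpace X]
    {p : Filter ι} [p.NeBot] {f : X → ℝ} {g : ι → X → ℝ} {x : ι → X} {s : Set X} {x₀ y : X}
    (hf : ContinuousWithinAt f s x₀) (hx : Tendsto x p (𝓝[s] x₀))
    (hg : TendstoUniformlyOn g 0 p (insert y s))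
    (hmin : ∀ i, f (x i) + g i (x i) ≤ f y + g i y) :
    f x₀ ≤ f y := by
  have hgx : Tendsto (fun i => g i (x i)) p (𝓝 0) :=
    (hg.mono (subset_insert y s)).tendsto_comp continuousWithinAt_const hx
  have hgy : Tendsto (fun i => g i y) p (𝓝 0) := hg.tendsto_at (mem_insert y s)
  refine le_of_tendsto_of_tendsto' (b := p) ?_ ?_ hmin
  · simpa using (hf.tendsto.comp hx).add hgx
  · simpa using tendsto_const_nhds.add hgy

theorem stmt_19_general (l : ℕ) (Θ : Set (Fin l → ℝ)) (f : (Fin l → ℝ) → ℝ)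
    (r : ℝ → (Fin l → ℝ) → ℝ)
    (hf : ContinuousOn f Θ)
    (hconv : ∀ K : Set (Fin l → ℝ), K ⊆ Θ → IsCompact K →
      TendstoUniformlyOn r (fun _ => 0) (nhdsWithin 0 (Set.Ioi 0)) K)
    (h : ℕ → ℝ) (hpos : ∀ n, 0 < h n)
    (hlim : Tendsto h atTop (nhds 0))
    (θseq : ℕ → (Fin l → ℝ))
    (hmem : ∀ n, θseq n ∈ Θ)
    (hargmin : ∀ n, ∀ θ ∈ Θ, f (θseq n) + r (h n) (θseq n) ≤ f θ + r (h n) θ)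
    (θstar : Fin l → ℝ) (hθstar : θstar ∈ Θ)
    (φ : ℕ → ℕ) (hφ : StrictMono φ)
    (hlimθ : Tendsto (θseq ∘ φ) atTop (nhds θstar)) :
    ∀ θ ∈ Θ, f θstar ≤ f θ := by
  intro θ hθ
  have hrange : range (θseq ∘ φ) ⊆ Θ := range_subset_iff.2 fun n => hmem (φ n)
  have hK : IsCompact (insert θ (insert θstar (range (θseq ∘ φ)))) :=
    hlimθ.isCompact_insert_range.insert θ
  have hKΘ : insert θ (insert θstar (range (θseq ∘ φ))) ⊆ Θ :=
    insert_subset hθ (insert_subset hθstar hrange)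
  have hhφ : Tendsto (h ∘ φ) atTop (𝓝[>] 0) :=
    tendsto_nhdsWithin_iff.2 ⟨hlim.comp hφ.tendsto_atTop, .of_forall fun n => hpos (φ n)⟩
  exact le_of_add_le_add_of_tendstoUniformlyOn ((hf θstar hθstar).mono hrange)
    (tendsto_nhdsWithin_range.2 hlimθ)
    (((hconv _ hKΘ hK).seq_tendstoUniformlyOn _ hhφ).mono
      (insert_subset_insert (subset_insert _ _)))
    fun n => hargmin (φ n) θ hθ

theorem stmt_19 (l : ℕ) (Θ : Set (Fin l → ℝ)) (f : (Fin l → ℝ) → ℝ)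
    (r : ℝ → (Fin l → ℝ) → ℝ)
    (hf : ContinuousOn f Θ)
    (hr : ∀ h : ℝ, 0 < h → ContinuousOn (r h) Θ)
    (hconv : ∀ K : Set (Fin l → ℝ), K ⊆ Θ → IsCompact K →
      TendstoUniformlyOn r (fun _ => 0) (nhdsWithin 0 (Set.Ioi 0)) K)
    (h : ℕ → ℝ) (hpos : ∀ n, 0 < h n) (hanti : Antitone h)
    (hlim : Tendsto h atTop (nhds 0))
    (θseq : ℕ → (Fin l → ℝ))
    (hmem : ∀ n, θseq n ∈ Θ)
    (hargmin : ∀ n, ∀ θ ∈ Θ, f (θseq n) + r (h n) (θseq n) ≤ f θ + r (h n) θ)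
    (θstar : Fin l → ℝ) (hθstar : θstar ∈ Θ)
    (φ : ℕ → ℕ) (hφ : StrictMono φ)
    (hlimθ : Tendsto (θseq ∘ φ) atTop (nhds θstar)) :
    ∀ θ ∈ Θ, f θstar ≤ f θ :=
  stmt_19_general l Θ f r hf hconv h hpos hlim θseq hmem hargmin θstar hθstar φ hφ hlimθ
end
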